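/- arXiv:1402.3090 — 9 statements merged into one kernel-verified Lean document; each statement's English description precedes it below -/
import Mathlib

section
/- Let E be a set and C a collection of subsets of E satisfying the goodness axioms (singletons are in C; C is closed under taking subsets; C is closed under unions of families with nonempty common intersection). Then a set partition P of E has all blocks in C if and only if P refines the partition of E into maximal members of C. -/
/-- Under the goodness axioms, a set partition `P` of `E` has all its blocks in
`C` if and only if `P` refines the partition of `E` into maximal members of `C`. -/
theorem good_partition_iff_refines_maximal {E : Type*} (C : Set (Set E))
    (h_singletons : ∀ x : E, {x} ∈ C)
    (h_subsets : ∀ F ∈ C, ∀ F' ⊆ F, F' ∈ C)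
    (h_unions : ∀ 𝒮 : Set (Set E), 𝒮 ⊆ C → (⋂₀ 𝒮).Nonempty → ⋃₀ 𝒮 ∈ C)
    (P : Set (Set E)) (hP : Setoid.IsPartition P) :
    (∀ p ∈ P, p ∈ C) ↔
      ∀ p ∈ P, ∃ q ∈ {F | F ∈ C ∧ ∀ G ∈ C, F ⊆ G → F = G}, p ⊆ q := by
  constructor
  · intro hC p hp
    have hpne : p.Nonempty := Set.nonempty_iff_ne_empty.2 (fun h => hP.1 (h ▸ hp))
    obtain ⟨x, hx⟩ := hpne
    set M := ⋃₀ {G ∈ C | x ∈ G} with hM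
    have hMC : M ∈ C := by
      apply h_unions _ (fun G hG => hG.1)
      exact ⟨x, fun G hG => hG.2⟩
    refine ⟨M, ⟨hMC, fun G hG hMG => ?_⟩, fun y hy => Set.mem_sUnion.2 ⟨p, ⟨hC p hp, hx⟩, hy⟩⟩
    have hxM : x ∈ M := Set.mem_sUnion.2 ⟨{x}, ⟨h_singletons x, rfl⟩, rfl⟩
    exact subset_antisymm hMG (fun y hy => Set.mem_sUnion.2 ⟨G, ⟨hG, hMG hxM⟩, hy⟩)
  · intro h p hp
    obtain ⟨q, ⟨hq, _⟩, hpq⟩ := h p hp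
    exact h_subsets q hq p hpq
end

section
/- Let E be a set, C a collection of subsets of E satisfying the goodness axioms, and suppose the maximal members of C form a partition into finitely many blocks. Then the collection of good set partitions of E forms a principal filter in the refinement lattice of set partitions of E; in particular it is closed under joins and meets. -/
/-- A setoid (i.e. a set partition, viewed through its equivalence relation) on `E` is *good*
w.r.t. a collection `C` of subsets of `E` if all its equivalence classes (blocks) belong to `C`. -/
def GoodSetoid {E : Type*} (C : Set (Set E)) (s : Setoid E) : Prop :=
  ∀ x : E, {y | s.r x y} ∈ C

/-- Under the goodness axioms, if the maximal members of `C` form a partition with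
finitely many blocks, then the good set partitions of `E` form a principal filter in the
refinement lattice of set partitions of `E` (here: the set of setoids below a fixed setoid `s₀`,
Mathlib's order on setoids being "finer than", i.e. the opposite of the coarsening order used in
the paper); in particular the good partitions are closed under joins and meets. -/
theorem good_partitions_principal_filter {E : Type*} (C : Set (Set E))
    (h_singletons : ∀ x : E, {x} ∈ C)
    (h_subsets : ∀ F ∈ C, ∀ F' ⊆ F, F' ∈ C)
    (h_unions : ∀ 𝒮 : Set (Set E), 𝒮 ⊆ C → (⋂₀ 𝒮).Nonempty → ⋃₀ 𝒮 ∈ C)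
    (h_fin : {F | F ∈ C ∧ ∀ G ∈ C, F ⊆ G → F = G}.Finite) :
    (∃ s₀ : Setoid E, ∀ s : Setoid E, GoodSetoid C s ↔ s ≤ s₀) ∧
      (∀ s t : Setoid E, GoodSetoid C s → GoodSetoid C t →
        GoodSetoid C (s ⊔ t) ∧ GoodSetoid C (s ⊓ t)) := by
  -- the canonical coarsest good partition: x ~ y iff they lie in a common member of C
  set s₀ : Setoid E :=
    { r := fun x y => ∃ F ∈ C, x ∈ F ∧ y ∈ F
      iseqv := by
        constructor
        · intro x; exact ⟨{x}, h_singletons x, rfl, rfl⟩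
        · rintro x y ⟨F, hF, hx, hy⟩; exact ⟨F, hF, hy, hx⟩
        · rintro x y z ⟨F, hF, hx, hyF⟩ ⟨G, hG, hyG, hz⟩
          refine ⟨⋃₀ {F, G}, h_unions _ ?_ ⟨y, ?_⟩, ?_, ?_⟩
          · rintro H (rfl | rfl)
            · exact hF
            · simp_all
          · rintro H (rfl | rfl)
            · exact hyF
            · simp_all
          · exact ⟨F, by simp, hx⟩
          · exact ⟨G, by simp, hz⟩ } with hs₀
  have key : ∀ s : Setoid E, GoodSetoid C s ↔ s ≤ s₀ := by
    intro s
    constructor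
    · intro hs x y hxy
      exact ⟨{z | s.r x z}, hs x, s.refl' x, hxy⟩
    · intro hle x
      have hsub : {y | s.r x y} ⊆ {y | ∃ F ∈ C, x ∈ F ∧ y ∈ F} := fun y hy => hle hy
      have hclass : {y | ∃ F ∈ C, x ∈ F ∧ y ∈ F} ∈ C := by
        have : {y | ∃ F ∈ C, x ∈ F ∧ y ∈ F} = ⋃₀ {F | F ∈ C ∧ x ∈ F} := by
          ext y
          constructor
          · rintro ⟨F, hF, hx, hy⟩; exact ⟨F, ⟨hF, hx⟩, hy⟩
          · rintro ⟨F, ⟨hF, hx⟩, hy⟩; exact ⟨F, hF, hx, hy⟩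
        rw [this]
        exact h_unions _ (fun F hF => hF.1) ⟨x, fun F hF => hF.2⟩
      exact h_subsets _ hclass _ hsub
  refine ⟨⟨s₀, key⟩, fun s t hs ht => ?_⟩
  constructor
  · exact (key _).2 (sup_le ((key s).1 hs) ((key t).1 ht))
  · exact (key _).2 (le_trans inf_le_left ((key s).1 hs))
end

section
/- Let R be a relational structure on a set E and let (E_x)_{x∈X} be a set partition of E. Then (E_x)_{x∈X} is a monomorphic decomposition of R if and only if each block E_x is a monomorphic part of R. -/
/-- A relational structure on a base set (type) `E`: a family of finitary relations on `E`. -/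
structure RelStruct (E : Type*) where
  ι : Type*
  arity : ι → ℕ
  rel : ∀ i : ι, (Fin (arity i) → E) → Prop

/-- The substructures induced by `R` on `A` and `B` are isomorphic: there is a bijection
`A ≃ B` transporting every relation of `R` restricted to `A` onto its restriction to `B`. -/
def RelStruct.Iso {E : Type*} (R : RelStruct E) (A B : Set E) : Prop :=
  ∃ e : A ≃ B, ∀ (i : R.ι) (v : Fin (R.arity i) → A),
    R.rel i (fun j => (v j : E)) ↔ R.rel i (fun j => (e (v j) : E))

/-- `F` is a monomorphic part of `R`: any two finite subsets of the same cardinality which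
agree outside `F` induce isomorphic substructures. -/
def IsMonoPart {E : Type*} (R : RelStruct E) (F : Set E) : Prop :=
  ∀ A A' : Set E, A.Finite → A'.Finite → A.ncard = A'.ncard → A \ F = A' \ F →
    R.Iso A A'

/-- A collection `P` of subsets of `E` (a set partition of `E`) is a monomorphic
decomposition of `R` if any two finite subsets meeting every block in the same number of
elements induce isomorphic substructures. -/
def IsMonoDecomp {E : Type*} (R : RelStruct E) (P : Set (Set E)) : Prop :=
  ∀ A A' : Set E, A.Finite → A'.Finite →
    (∀ p ∈ P, (A ∩ p).ncard = (A' ∩ p).ncard) → R.Iso A A'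

/-- Indexed variant: a family `(B x)_{x ∈ X}` of subsets of `E` is a monomorphic
decomposition of `R` if any two finite subsets meeting every block in the same number of
elements induce isomorphic substructures. -/
def IsMonoDecompFam {E : Type*} {X : Type*} (R : RelStruct E) (B : X → Set E) : Prop :=
  ∀ A A' : Set E, A.Finite → A'.Finite →
    (∀ x : X, (A ∩ B x).ncard = (A' ∩ B x).ncard) → R.Iso A A'

/-!
Two finite sets that agree outside one block meet every other block equally, which gives the
forward direction. Conversely, if every block is a monomorphic part, replacing `A ∩ B x` by an
equally large `A' ∩ B x` preserves the isomorphism type of `A`; only finitely many blocks meet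
`A ∪ A'`, so finitely many such replacements turn `A` into `A'`.
-/

open Function

namespace RelStruct

variable {E : Type*} {R : RelStruct E}

lemma Iso.refl (R : RelStruct E) (A : Set E) : R.Iso A A :=
  ⟨Equiv.refl A, fun _ _ => Iff.rfl⟩

lemma Iso.trans {A C D : Set E} (h₁ : R.Iso A C) (h₂ : R.Iso C D) : R.Iso A D := by
  obtain ⟨e, he⟩ := h₁
  obtain ⟨f, hf⟩ := h₂
  exact ⟨e.trans f, fun i v => (he i v).trans (hf i fun j => e (v j))⟩

end RelStruct

namespace Set

variable {E : Type*} {A A' F G : Set E}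

lemma ncard_eq_ncard_iff_ncard_inter_eq_of_sdiff_eq (hA : A.Finite) (hA' : A'.Finite)
    (h : A \ F = A' \ F) : A.ncard = A'.ncard ↔ (A ∩ F).ncard = (A' ∩ F).ncard := by
  have h₁ := ncard_inter_add_ncard_sdiff_eq_ncard A F hA
  have h₂ := ncard_inter_add_ncard_sdiff_eq_ncard A' F hA'
  rw [h] at h₁
  omega

lemma inter_eq_sdiff_inter_of_disjoint (h : Disjoint F G) : A ∩ G = A \ F ∩ G := by
  ext a
  simp only [mem_inter_iff, mem_sdiff]
  exact ⟨fun ⟨ha, hG⟩ => ⟨⟨ha, fun hF => h.notMem_of_mem_left hF hG⟩, hG⟩,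
    fun ⟨⟨ha, _⟩, hG⟩ => ⟨ha, hG⟩⟩

lemma sdiff_union_inter_inter_self : (A \ F ∪ A' ∩ F) ∩ F = A' ∩ F := by
  ext a
  simp only [mem_inter_iff, mem_union, mem_sdiff]
  tauto

lemma sdiff_union_inter_sdiff_self : (A \ F ∪ A' ∩ F) \ F = A \ F := by
  ext a
  simp only [mem_sdiff, mem_union, mem_inter_iff]
  tauto

lemma sdiff_union_inter_inter_of_disjoint (h : Disjoint F G) : (A \ F ∪ A' ∩ F) ∩ G = A ∩ G := by
  rw [union_inter_distrib_right, inter_assoc, h.inter_eq, inter_empty, union_empty,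
    ← inter_eq_sdiff_inter_of_disjoint h]

end Set

namespace IndexedPartition

variable {E X : Type*} {B : X → Set E}

lemma eq_of_forall_inter_eq (hP : IndexedPartition B) {A A' : Set E}
    (h : ∀ x, A ∩ B x = A' ∩ B x) : A = A' := by
  rw [← Set.inter_univ A, ← Set.inter_univ A', ← hP.iUnion, Set.inter_iUnion, Set.inter_iUnion]
  exact Set.iUnion_congr h

lemma exists_finset_inter_eq_empty (hP : IndexedPartition B) {A : Set E} (hA : A.Finite) :
    ∃ s : Finset X, ∀ x ∉ s, A ∩ B x = ∅ := by
  refine ⟨(hA.image hP.index).toFinset, fun x hx => ?_⟩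
  rw [Set.eq_empty_iff_forall_notMem]
  rintro a ⟨ha, hax⟩
  exact hx ((hA.image hP.index).mem_toFinset.mpr ⟨a, ha, hP.mem_iff_index_eq.mp hax⟩)

end IndexedPartition

section

variable {E X : Type*} {R : RelStruct E} {B : X → Set E}

lemma IsMonoDecompFam.isMonoPart (hdisj : Pairwise (Disjoint on B)) (h : IsMonoDecompFam R B)
    (x : X) : IsMonoPart R (B x) := by
  intro A A' hA hA' hcard hdiff
  refine h A A' hA hA' fun y => ?_
  rcases eq_or_ne y x with rfl | hyx
  · exact (Set.ncard_eq_ncard_iff_ncard_inter_eq_of_sdiff_eq hA hA' hdiff).mp hcard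
  · rw [Set.inter_eq_sdiff_inter_of_disjoint (hdisj hyx.symm),
      Set.inter_eq_sdiff_inter_of_disjoint (A := A') (hdisj hyx.symm), hdiff]

lemma IsMonoPart.iso_sdiff_union_inter {F : Set E} (hF : IsMonoPart R F) {A A' : Set E}
    (hA : A.Finite) (hA' : A'.Finite) (hcard : (A ∩ F).ncard = (A' ∩ F).ncard) :
    R.Iso A (A \ F ∪ A' ∩ F) := by
  have hdiff : A \ F = (A \ F ∪ A' ∩ F) \ F := Set.sdiff_union_inter_sdiff_self.symm
  refine hF _ _ hA (hA.sdiff.union (hA'.inter_of_left F)) ?_ hdiff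
  rwa [Set.ncard_eq_ncard_iff_ncard_inter_eq_of_sdiff_eq hA (hA.sdiff.union (hA'.inter_of_left F))
    hdiff, Set.sdiff_union_inter_inter_self]

lemma iso_of_forall_notMem_finset_inter_eq (hP : IndexedPartition B)
    (h : ∀ x, IsMonoPart R (B x)) (s : Finset X) {A A' : Set E} (hA : A.Finite)
    (hA' : A'.Finite) (hcard : ∀ x, (A ∩ B x).ncard = (A' ∩ B x).ncard)
    (hs : ∀ x ∉ s, A ∩ B x = A' ∩ B x) : R.Iso A A' := by
  classical
  induction s using Finset.induction_on generalizing A with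
  | empty => exact hP.eq_of_forall_inter_eq (fun x => hs x (Finset.notMem_empty x)) ▸
      RelStruct.Iso.refl R A
  | insert x s _ ih =>
    have hblock : ∀ y ≠ x, (A \ B x ∪ A' ∩ B x) ∩ B y = A ∩ B y := fun y hyx =>
      Set.sdiff_union_inter_inter_of_disjoint (hP.disjoint hyx.symm)
    refine ((h x).iso_sdiff_union_inter hA hA' (hcard x)).trans
      (ih (hA.sdiff.union (hA'.inter_of_left _)) (fun y => ?_) (fun y hy => ?_))
    · rcases eq_or_ne y x with rfl | hyx
      · rw [Set.sdiff_union_inter_inter_self]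
      · rw [hblock y hyx, hcard y]
    · rcases eq_or_ne y x with rfl | hyx
      · exact Set.sdiff_union_inter_inter_self
      · rw [hblock y hyx, hs y (by simp [hy, hyx])]

lemma isMonoDecompFam_of_forall_isMonoPart (hP : IndexedPartition B)
    (h : ∀ x, IsMonoPart R (B x)) : IsMonoDecompFam R B := by
  intro A A' hA hA' hcard
  obtain ⟨s, hs⟩ := hP.exists_finset_inter_eq_empty hA
  obtain ⟨s', hs'⟩ := hP.exists_finset_inter_eq_empty hA'
  classical
  refine iso_of_forall_notMem_finset_inter_eq hP h (s ∪ s') hA hA' hcard fun x hx => ?_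
  rw [Finset.mem_union, not_or] at hx
  rw [hs x hx.1, hs' x hx.2]

end

/-- A set partition `(B x)_{x ∈ X}` of `E` is a monomorphic decomposition of a
relational structure `R` on `E` if and only if each block `B x` is a monomorphic part of `R`. -/
theorem isMonoDecomp_iff_blocks_monoParts {E : Type*} {X : Type*} (R : RelStruct E)
    (B : X → Set E) (hpart : IndexedPartition B) :
    IsMonoDecompFam R B ↔ ∀ x : X, IsMonoPart R (B x) :=
  ⟨IsMonoDecompFam.isMonoPart hpart.disjoint, isMonoDecompFam_of_forall_isMonoPart hpart⟩
end

section
/- Let E be a set with, for each subset D ⊆ E, a collection C_D of D-good subsets satisfying the goodness axioms (a)-(e), and suppose D ⊆ E is such that the minimal good partition of D has finitely many blocks, say s(D) blocks. Then D contains a finite subset F with s(F) = s(D), where s(F) is the number of blocks of the minimal good partition of F. -/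
/-- The maximal members of the collection `C D` of `D`-good sets: the blocks of the minimal
good partition of `D`. -/
def maxGood {E : Type*} (C : Set E → Set (Set E)) (D : Set E) : Set (Set E) :=
  {F | F ∈ C D ∧ ∀ G ∈ C D, F ⊆ G → F = G}

/-!
Call `x, y ∈ D` connected in `D` if some `D`-good set contains both. By (a)–(c) this is an
equivalence relation whose classes are the blocks of the minimal good partition of `D`, and by
(d) points connected in `D` stay connected in every subset containing them. Axiom (e) makes
connectedness compact: if `x, y` are not connected in `D`, they are already not connected in some
finite `W ⊆ D` (a Zorn argument over chains of subsets replaces the induction on `|D|`). Pick one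
point in each of the `s(D)` blocks and, for every pair of these points, such a finite separating
`W`. The union `F` of all of them is finite, and the chosen points are still one per block of the
minimal good partition of `F`, so `s(F) = s(D)`.
-/

open Set

/-- Zorn's lemma, applied to the sets `W` such that `P` holds on every `U` with `U \ W` finite. -/
theorem Set.induction_of_finite_of_isChain {α : Type*} {P : Set α → Prop}
    (hfinite : ∀ s : Set α, s.Finite → P s)
    (hchain : ∀ c : Set (Set α), IsChain (· ⊆ ·) c → c.Nonempty → (∀ s ∈ c, P s) → P (⋃₀ c))
    (s : Set α) : P s := by
  set S : Set (Set α) := {W | ∀ U, (U \ W).Finite → P U}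
  have hS : ∀ c ⊆ S, IsChain (· ⊆ ·) c → c.Nonempty → ∃ ub ∈ S, ∀ W ∈ c, W ⊆ ub := by
    intro c hcS hc hne
    refine ⟨⋃₀ c, fun U hU => ?_, fun W hW => subset_sUnion_of_mem hW⟩
    have hchain' : IsChain (· ⊆ ·) ((fun W => U ∩ (W ∪ U \ ⋃₀ c)) '' c) :=
      hc.image_of_map_rel _ _ _ fun _ _ h =>
        inter_subset_inter_right _ (union_subset_union_left _ h)
    have hcover : ⋃₀ ((fun W => U ∩ (W ∪ U \ ⋃₀ c)) '' c) = U := by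
      refine subset_antisymm (sUnion_subset (by rintro _ ⟨W, -, rfl⟩; exact inter_subset_left)) ?_
      intro z hz
      by_cases hzc : z ∈ ⋃₀ c
      · obtain ⟨W, hW, hzW⟩ := hzc
        exact ⟨_, ⟨W, hW, rfl⟩, hz, Or.inl hzW⟩
      · obtain ⟨W, hW⟩ := hne
        exact ⟨_, ⟨W, hW, rfl⟩, hz, Or.inr ⟨hz, hzc⟩⟩
    rw [← hcover]
    refine hchain _ hchain' (hne.image _) ?_
    rintro _ ⟨W, hW, rfl⟩
    exact hcS hW _ (hU.subset fun z ⟨⟨_, hz⟩, hzW⟩ => hz.resolve_left hzW)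
  obtain ⟨m, -, hm⟩ := zorn_subset_nonempty S hS ∅ fun U hU => hfinite U (by simpa using hU)
  have hm_univ : m = univ := by
    refine eq_univ_of_forall fun a => ?_
    refine hm.mem_of_prop_insert fun U hU => hm.prop U ?_
    exact (hU.insert a).subset fun z ⟨hzU, hzm⟩ => by
      by_cases hza : z = a
      · exact Or.inl hza
      · exact Or.inr ⟨hzU, fun h => h.elim hza hzm⟩
  exact hm.prop s (by simp [hm_univ])

namespace GoodSets

variable {E : Type*} {C : Set E → Set (Set E)} {D F T M : Set E} {x y z : E}

/-- The blocks of the minimal good partition of `D` are the classes of this relation. -/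
def Conn (C : Set E → Set (Set E)) (D : Set E) (x y : E) : Prop :=
  ∃ G ∈ C D, x ∈ G ∧ y ∈ G

def block (C : Set E → Set (Set E)) (D : Set E) (x : E) : Set E :=
  {y | Conn C D x y}

structure IsTransversal (C : Set E → Set (Set E)) (D T : Set E) : Prop where
  subset : T ⊆ D
  exists_conn : ∀ x ∈ D, ∃ t ∈ T, Conn C D x t
  pairwise_not_conn : T.Pairwise fun s t => ¬ Conn C D s t

theorem Conn.symm (h : Conn C D x y) : Conn C D y x :=
  let ⟨G, hG, hx, hy⟩ := h
  ⟨G, hG, hy, hx⟩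

theorem conn_refl (h_singletons : ∀ D : Set E, ∀ x ∈ D, {x} ∈ C D) (hx : x ∈ D) :
    Conn C D x x :=
  ⟨{x}, h_singletons D x hx, rfl, rfl⟩

theorem Conn.trans (h_unions : ∀ D : Set E, ∀ 𝒮 ⊆ C D, (⋂₀ 𝒮).Nonempty → ⋃₀ 𝒮 ∈ C D)
    (hxy : Conn C D x y) (hyz : Conn C D y z) : Conn C D x z := by
  obtain ⟨G, hG, hxG, hyG⟩ := hxy
  obtain ⟨H, hH, hyH, hzH⟩ := hyz
  have hGH : G ∪ H ∈ C D := by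
    rw [← sUnion_pair]
    exact h_unions D _ (pair_subset hG hH) ⟨y, by simp [hyG, hyH]⟩
  exact ⟨G ∪ H, hGH, Or.inl hxG, Or.inr hzH⟩

theorem Conn.restrict (h_restrict : ∀ D₁ D₂ : Set E, D₁ ⊆ D₂ → ∀ F ∈ C D₂, F ∩ D₁ ∈ C D₁)
    (hFD : F ⊆ D) (h : Conn C D x y) (hx : x ∈ F) (hy : y ∈ F) : Conn C F x y :=
  let ⟨G, hG, hxG, hyG⟩ := h
  ⟨G ∩ F, h_restrict F D hFD G hG, ⟨hxG, hx⟩, ⟨hyG, hy⟩⟩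

theorem block_mem (h_unions : ∀ D : Set E, ∀ 𝒮 ⊆ C D, (⋂₀ 𝒮).Nonempty → ⋃₀ 𝒮 ∈ C D) :
    block C D x ∈ C D := by
  have h : block C D x = ⋃₀ {G | G ∈ C D ∧ x ∈ G} := by
    ext y
    simp [block, Conn, and_assoc]
  rw [h]
  exact h_unions D _ (fun G hG => hG.1) ⟨x, fun G hG => hG.2⟩

theorem block_eq_of_conn (h_unions : ∀ D : Set E, ∀ 𝒮 ⊆ C D, (⋂₀ 𝒮).Nonempty → ⋃₀ 𝒮 ∈ C D)
    (h : Conn C D x y) : block C D x = block C D y :=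
  ext fun _ => ⟨h.symm.trans h_unions, h.trans h_unions⟩

theorem eq_block_of_mem_maxGood
    (h_unions : ∀ D : Set E, ∀ 𝒮 ⊆ C D, (⋂₀ 𝒮).Nonempty → ⋃₀ 𝒮 ∈ C D)
    (hM : M ∈ maxGood C D) (hx : x ∈ M) : M = block C D x :=
  hM.2 _ (block_mem h_unions) fun _ hy => ⟨M, hM.1, hx, hy⟩

theorem block_mem_maxGood (h_singletons : ∀ D : Set E, ∀ x ∈ D, {x} ∈ C D)
    (h_unions : ∀ D : Set E, ∀ 𝒮 ⊆ C D, (⋂₀ 𝒮).Nonempty → ⋃₀ 𝒮 ∈ C D) (hx : x ∈ D) :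
    block C D x ∈ maxGood C D :=
  ⟨block_mem h_unions, fun G hG hle =>
    hle.antisymm fun _ hy => ⟨G, hG, hle (conn_refl h_singletons hx), hy⟩⟩

theorem nonempty_of_mem_maxGood (h_singletons : ∀ D : Set E, ∀ x ∈ D, {x} ∈ C D)
    (hD : D.Nonempty) (hM : M ∈ maxGood C D) : M.Nonempty := by
  obtain ⟨d, hd⟩ := hD
  rw [nonempty_iff_ne_empty]
  rintro rfl
  exact singleton_ne_empty d (hM.2 {d} (h_singletons D d hd) (empty_subset _)).symm

/-- Axiom (e) applied to the set of points connected to `x` in every member of the chain. -/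
theorem conn_sUnion_of_isChain (h_singletons : ∀ D : Set E, ∀ x ∈ D, {x} ∈ C D)
    (h_subsets : ∀ D : Set E, ∀ F ∈ C D, ∀ F' ⊆ F, F' ∈ C D)
    (h_unions : ∀ D : Set E, ∀ 𝒮 ⊆ C D, (⋂₀ 𝒮).Nonempty → ⋃₀ 𝒮 ∈ C D)
    (h_chain : ∀ 𝒟 : Set (Set E), IsChain (· ⊆ ·) 𝒟 → ∀ F ⊆ ⋃₀ 𝒟,
      (∀ D' ∈ 𝒟, F ∩ D' ∈ C D') → F ∈ C (⋃₀ 𝒟))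
    {𝒟 : Set (Set E)} (hchain : IsChain (· ⊆ ·) 𝒟) (hne : 𝒟.Nonempty)
    (h : ∀ D' ∈ 𝒟, x ∈ D' ∧ y ∈ D' ∧ Conn C D' x y) : Conn C (⋃₀ 𝒟) x y := by
  set G : Set E := {z | z ∈ ⋃₀ 𝒟 ∧ ∀ D' ∈ 𝒟, z ∈ D' → Conn C D' x z}
  have hG : G ∈ C (⋃₀ 𝒟) := by
    refine h_chain 𝒟 hchain G (fun z hz => hz.1) fun D' hD' => ?_
    exact h_subsets D' _ (block_mem h_unions) _ fun z hz => hz.1.2 D' hD' hz.2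
  obtain ⟨D₀, hD₀⟩ := hne
  refine ⟨G, hG, ⟨⟨D₀, hD₀, (h D₀ hD₀).1⟩, fun D' hD' _ => ?_⟩,
    ⟨⟨D₀, hD₀, (h D₀ hD₀).2.1⟩, fun D' hD' _ => (h D' hD').2.2⟩⟩
  exact conn_refl h_singletons (h D' hD').1

theorem exists_finite_not_conn (h_singletons : ∀ D : Set E, ∀ x ∈ D, {x} ∈ C D)
    (h_subsets : ∀ D : Set E, ∀ F ∈ C D, ∀ F' ⊆ F, F' ∈ C D)
    (h_unions : ∀ D : Set E, ∀ 𝒮 ⊆ C D, (⋂₀ 𝒮).Nonempty → ⋃₀ 𝒮 ∈ C D)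
    (h_chain : ∀ 𝒟 : Set (Set E), IsChain (· ⊆ ·) 𝒟 → ∀ F ⊆ ⋃₀ 𝒟,
      (∀ D' ∈ 𝒟, F ∩ D' ∈ C D') → F ∈ C (⋃₀ 𝒟))
    (hx : x ∈ D) (hy : y ∈ D) (h : ¬ Conn C D x y) :
    ∃ W ⊆ D, W.Finite ∧ x ∈ W ∧ y ∈ W ∧ ¬ Conn C W x y := by
  by_contra! hfin
  suffices H : ∀ U : Set E, U ⊆ D → Conn C (insert x (insert y U)) x y by
    exact h (by simpa [hx, hy] using H D subset_rfl)
  refine Set.induction_of_finite_of_isChain (fun U hU hUD => ?_) (fun c hc hne hP hcD => ?_)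
  · exact hfin _ (insert_subset hx (insert_subset hy hUD)) ((hU.insert y).insert x)
      (mem_insert x _) (mem_insert_of_mem x (mem_insert y U))
  · have hunion : ⋃₀ ((fun U => insert x (insert y U)) '' c) = insert x (insert y (⋃₀ c)) := by
      obtain ⟨U₀, hU₀⟩ := hne
      ext z
      simp only [mem_sUnion, mem_image, mem_insert_iff]
      aesop
    rw [← hunion]
    refine conn_sUnion_of_isChain h_singletons h_subsets h_unions h_chain
      (hc.image_of_map_rel _ _ _ fun _ _ h => insert_subset_insert (insert_subset_insert h))
      (hne.image _) ?_
    rintro _ ⟨U, hU, rfl⟩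
    exact ⟨mem_insert x _, mem_insert_of_mem x (mem_insert y U),
      hP U hU ((subset_sUnion_of_mem hU).trans hcD)⟩

theorem IsTransversal.ncard_maxGood (h_sub : ∀ D : Set E, ∀ F ∈ C D, F ⊆ D)
    (h_singletons : ∀ D : Set E, ∀ x ∈ D, {x} ∈ C D)
    (h_unions : ∀ D : Set E, ∀ 𝒮 ⊆ C D, (⋂₀ 𝒮).Nonempty → ⋃₀ 𝒮 ∈ C D)
    (hT : IsTransversal C D T) (hD : D.Nonempty) : (maxGood C D).ncard = T.ncard := by
  have hmax : maxGood C D = block C D '' T := by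
    refine subset_antisymm (fun M hM => ?_) ?_
    · obtain ⟨x, hx⟩ := nonempty_of_mem_maxGood h_singletons hD hM
      obtain ⟨t, ht, hxt⟩ := hT.exists_conn x (h_sub D M hM.1 hx)
      exact ⟨t, ht, ((eq_block_of_mem_maxGood h_unions hM hx).trans
        (block_eq_of_conn h_unions hxt)).symm⟩
    · rintro _ ⟨t, ht, rfl⟩
      exact block_mem_maxGood h_singletons h_unions (hT.subset ht)
  rw [hmax, InjOn.ncard_image]
  intro s hs t ht hst
  by_contra hne
  refine hT.pairwise_not_conn hs ht hne ?_
  have ht' : t ∈ block C D t := conn_refl h_singletons (hT.subset ht)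
  rwa [← hst] at ht'

theorem exists_isTransversal (h_sub : ∀ D : Set E, ∀ F ∈ C D, F ⊆ D)
    (h_singletons : ∀ D : Set E, ∀ x ∈ D, {x} ∈ C D)
    (h_unions : ∀ D : Set E, ∀ 𝒮 ⊆ C D, (⋂₀ 𝒮).Nonempty → ⋃₀ 𝒮 ∈ C D)
    (hD : D.Nonempty) (hfin : (maxGood C D).Finite) :
    ∃ T, IsTransversal C D T ∧ T.Finite := by
  have : Nonempty E := hD.to_type
  choose! pt hpt using fun M (hM : M ∈ maxGood C D) => nonempty_of_mem_maxGood h_singletons hD hM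
  refine ⟨pt '' maxGood C D, ⟨?_, fun x hx => ?_, ?_⟩, hfin.image pt⟩
  · rintro _ ⟨M, hM, rfl⟩
    exact h_sub D M hM.1 (hpt M hM)
  · have hB := block_mem_maxGood h_singletons h_unions hx
    exact ⟨pt _, mem_image_of_mem pt hB, hpt _ hB⟩
  · rintro _ ⟨M, hM, rfl⟩ _ ⟨N, hN, rfl⟩ hne hconn
    refine hne (congrArg pt ?_)
    rw [eq_block_of_mem_maxGood h_unions hM (hpt M hM),
      eq_block_of_mem_maxGood h_unions hN (hpt N hN), block_eq_of_conn h_unions hconn]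

theorem IsTransversal.of_subset
    (h_restrict : ∀ D₁ D₂ : Set E, D₁ ⊆ D₂ → ∀ F ∈ C D₂, F ∩ D₁ ∈ C D₁)
    (hT : IsTransversal C D T) (hTF : T ⊆ F) (hFD : F ⊆ D)
    (hsep : T.Pairwise fun s t => ¬ Conn C F s t) : IsTransversal C F T where
  subset := hTF
  exists_conn x hx :=
    let ⟨t, ht, hxt⟩ := hT.exists_conn x (hFD hx)
    ⟨t, ht, hxt.restrict h_restrict hFD hx (hTF ht)⟩
  pairwise_not_conn := hsep

end GoodSets

open GoodSets in
/-- Given, for each `D ⊆ E`, a collection `C D` of `D`-good subsets satisfying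
the goodness axioms (a)–(e), if the minimal good partition of `D` has finitely many blocks
then `D` contains a finite subset `F` whose minimal good partition has the same number of
blocks. -/
theorem finite_subset_with_same_good_partition_size {E : Type*} (C : Set E → Set (Set E))
    (h_sub : ∀ D : Set E, ∀ F ∈ C D, F ⊆ D)
    (h_singletons : ∀ D : Set E, ∀ x ∈ D, {x} ∈ C D)
    (h_subsets : ∀ D : Set E, ∀ F ∈ C D, ∀ F' ⊆ F, F' ∈ C D)
    (h_unions : ∀ D : Set E, ∀ 𝒮 ⊆ C D, (⋂₀ 𝒮).Nonempty → ⋃₀ 𝒮 ∈ C D)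
    (h_restrict : ∀ D₁ D₂ : Set E, D₁ ⊆ D₂ → ∀ F ∈ C D₂, F ∩ D₁ ∈ C D₁)
    (h_chain : ∀ 𝒟 : Set (Set E), IsChain (· ⊆ ·) 𝒟 → ∀ F ⊆ ⋃₀ 𝒟,
      (∀ D' ∈ 𝒟, F ∩ D' ∈ C D') → F ∈ C (⋃₀ 𝒟))
    (D : Set E) (h_fin : (maxGood C D).Finite) :
    ∃ F : Set E, F ⊆ D ∧ F.Finite ∧ (maxGood C F).ncard = (maxGood C D).ncard := by
  rcases D.eq_empty_or_nonempty with rfl | hD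
  · exact ⟨∅, subset_rfl, finite_empty, rfl⟩
  obtain ⟨T, hT, hTfin⟩ := exists_isTransversal h_sub h_singletons h_unions hD h_fin
  have hsep : ∀ p ∈ T.offDiag, ∃ W ⊆ D, W.Finite ∧ p.1 ∈ W ∧ p.2 ∈ W ∧ ¬ Conn C W p.1 p.2 :=
    fun p ⟨hs, ht, hst⟩ => exists_finite_not_conn h_singletons h_subsets h_unions h_chain
      (hT.subset hs) (hT.subset ht) (hT.pairwise_not_conn hs ht hst)
  choose! W hWD hWfin hW₁ hW₂ hWsep using hsep
  set F := T ∪ ⋃ p ∈ T.offDiag, W p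
  have hFD : F ⊆ D := union_subset hT.subset (iUnion₂_subset hWD)
  have hTF : IsTransversal C F T := by
    refine hT.of_subset h_restrict subset_union_left hFD fun s hs t ht hst hconn => ?_
    have hp : (s, t) ∈ T.offDiag := ⟨hs, ht, hst⟩
    have hWF : W (s, t) ⊆ F := (subset_biUnion_of_mem hp).trans subset_union_right
    exact hWsep _ hp (hconn.restrict h_restrict hWF (hW₁ _ hp) (hW₂ _ hp))
  have hF : F.Nonempty :=
    let ⟨x, hx⟩ := hD
    let ⟨t, ht, _⟩ := hT.exists_conn x hx
    ⟨t, subset_union_left ht⟩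
  refine ⟨F, hFD, hTfin.union (hTfin.offDiag.biUnion hWfin), ?_⟩
  rw [hTF.ncard_maxGood h_sub h_singletons h_unions hF,
    hT.ncard_maxGood h_sub h_singletons h_unions hD]
end

section
/- Let f : ℕ → ℕ be a function whose generating series Σ f(n) Zⁿ is a rational function of the form P(Z)/((1−Z^{n₁})(1−Z^{n₂})⋯(1−Z^{n_k})) with P ∈ ℤ[Z]. Then f is eventually a quasi-polynomial of degree at most k−1; that is, there exist N and periodic functions a₀,…,a_{k−1} : ℕ → ℚ such that f(n) = a_{k−1}(n) n^{k−1} + ⋯ + a₀(n) for all n ≥ N. -/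
/-!
With `L = ∏ nᵢ`, every `1 - Z ^ nᵢ` divides `1 - Z ^ L`, so `F · (1 - Z ^ L) ^ k` is a polynomial,
where `F = Σ f(n) Zⁿ`. Its coefficients of high index are the `k`-th `L`-step forward differences
of `f`, which therefore vanish eventually. By the Gregory–Newton formula, `f` restricted to a
residue class `y + L ℕ` is then eventually a polynomial of degree `< k` in `(m - y) / L`, hence in
`m`; the coefficients of these polynomials, indexed by `m % L`, are the periodic functions.
-/

open Finset Function fwdDiff

section FwdDiff

variable {G : Type*} [AddCommGroup G]

theorem fwdDiff_iter_eq_zero_of_le {f : ℕ → G} {h k M : ℕ}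
    (hf : ∀ m ≥ M, Δ_[h] ^[k] f m = 0) {j y : ℕ} (hj : k ≤ j) (hy : M ≤ y) :
    Δ_[h] ^[j] f y = 0 := by
  obtain ⟨i, rfl⟩ := Nat.exists_eq_add_of_le' hj
  rw [iterate_add_apply, fwdDiff_iter_eq_sum_shift]
  exact sum_eq_zero fun l _ => by rw [hf _ (Nat.le_add_right_of_le hy), smul_zero]

theorem shift_eq_sum_range_fwdDiff_iter {M : Type*} [AddCommMonoid M] (f : M → G) (h y : M)
    {k : ℕ} (hf : ∀ j ≥ k, Δ_[h] ^[j] f y = 0) (n : ℕ) :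
    f (y + n • h) = ∑ j ∈ range k, n.choose j • Δ_[h] ^[j] f y := by
  rw [shift_eq_sum_fwdDiff_iter h f n y]
  calc ∑ j ∈ range (n + 1), n.choose j • Δ_[h] ^[j] f y
      = ∑ j ∈ range (n + 1 + k), n.choose j • Δ_[h] ^[j] f y :=
        sum_subset (range_mono (by omega)) fun j _ hj => by
          rw [Nat.choose_eq_zero_of_lt (by simp at hj; omega), zero_smul]
    _ = ∑ j ∈ range k, n.choose j • Δ_[h] ^[j] f y :=
        (sum_subset (range_mono (by omega)) fun j _ hj => by
          rw [hf j (by simpa using hj), smul_zero]).symm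

end FwdDiff

theorem prod_one_sub_pow_dvd_one_sub_pow_pow {R ι : Type*} [CommRing R] [Fintype ι] (x : R)
    {n : ι → ℕ} {L : ℕ} (hn : ∀ i, n i ∣ L) :
    ∏ i, (1 - x ^ n i) ∣ (1 - x ^ L) ^ Fintype.card ι := by
  rw [← card_univ, ← prod_const]
  refine prod_dvd_prod_of_dvd _ _ fun i _ => ?_
  obtain ⟨c, hc⟩ := hn i
  simpa only [hc, pow_mul] using one_sub_dvd_one_sub_pow (x ^ n i) c

namespace PowerSeries

variable {R : Type*} [CommRing R]

theorem exists_mul_one_sub_X_pow_pow_eq_coe {ι : Type*} [Fintype ι] {F : R⟦X⟧} {n : ι → ℕ}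
    {P : Polynomial R} (h : F * ∏ i, (1 - X ^ n i) = P) {L : ℕ} (hn : ∀ i, n i ∣ L) :
    ∃ Q : Polynomial R, F * (1 - X ^ L) ^ Fintype.card ι = (Q : R⟦X⟧) := by
  obtain ⟨Q, hQ⟩ := prod_one_sub_pow_dvd_one_sub_pow_pow (Polynomial.X : Polynomial R) hn
  replace hQ := congrArg Polynomial.coeToPowerSeries.ringHom hQ
  simp only [map_pow, map_sub, map_one, map_mul, map_prod,
    Polynomial.coeToPowerSeries.ringHom_apply, Polynomial.coe_X] at hQ
  exact ⟨P * Q, by rw [hQ, ← mul_assoc, h, Polynomial.coe_mul]⟩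

theorem coeff_mul_one_sub_X_pow_pow (F : R⟦X⟧) (L k m : ℕ) :
    coeff (m + k * L) (F * (1 - X ^ L) ^ k) = Δ_[L] ^[k] (fun n => coeff n F) m := by
  induction k generalizing m with
  | zero => simp
  | succ k ih =>
    rw [pow_succ, ← mul_assoc, mul_sub, mul_one, map_sub, coeff_mul_X_pow', if_pos (by nlinarith),
      show m + (k + 1) * L - L = m + k * L by
        rw [add_mul, one_mul, ← add_assoc, Nat.add_sub_cancel],
      show m + (k + 1) * L = m + L + k * L by ring, ih, ih, iterate_succ_apply']
    rfl

theorem fwdDiff_iter_coeff_eq_zero_of_mul_eq_coe {F : R⟦X⟧} {L k : ℕ} {P : Polynomial R}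
    (h : F * (1 - X ^ L) ^ k = (P : R⟦X⟧)) :
    ∀ m > P.natDegree, Δ_[L] ^[k] (fun n => coeff n F) m = 0 :=
  fun m hm => by
    rw [← coeff_mul_one_sub_X_pow_pow, h, Polynomial.coeff_coe,
      Polynomial.coeff_eq_zero_of_natDegree_lt (by omega)]

end PowerSeries

open Polynomial

section Field

variable {K : Type*} [Field K] [CharZero K]

theorem exists_degree_lt_eval_eq_sum_choose_mul (c : ℕ → K) (k : ℕ) :
    ∃ p : K[X], p.degree < k ∧ ∀ n : ℕ, p.eval (n : K) = ∑ j ∈ range k, (n.choose j : K) * c j := by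
  refine ⟨∑ j ∈ range k, (c j / j.factorial) • descPochhammer K j, mem_degreeLT.1 ?_, fun n => ?_⟩
  · refine Submodule.sum_mem _ fun j hj => Submodule.smul_mem _ _ (mem_degreeLT.2 ?_)
    refine degree_le_natDegree.trans_lt ?_
    rw [descPochhammer_natDegree]
    exact_mod_cast mem_range.1 hj
  · simp only [eval_finsetSum, eval_smul, smul_eq_mul, Nat.cast_choose_eq_descPochhammer_div]
    exact sum_congr rfl fun j _ => by ring

theorem exists_degree_lt_eval_eq_of_fwdDiff_iter_eq_zero {u : ℕ → K} {L k M : ℕ} (hL : 0 < L)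
    (hu : ∀ m ≥ M, Δ_[L] ^[k] u m = 0) {y : ℕ} (hy : M ≤ y) :
    ∃ q : K[X], q.degree < k ∧ ∀ m ≥ y, m % L = y % L → u m = q.eval (m : K) := by
  obtain ⟨p, hp_deg, hp_eval⟩ := exists_degree_lt_eval_eq_sum_choose_mul (Δ_[L] ^[·] u y) k
  have hLK : (L : K) ≠ 0 := by exact_mod_cast hL.ne'
  have hL' : (L : K)⁻¹ ≠ 0 := inv_ne_zero hLK
  -- `p` is a polynomial in `n = (m - y) / L`
  refine ⟨p.comp (C (L : K)⁻¹ * X + C (-(y : K) / L)), ?_, fun m hmy hmod => ?_⟩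
  · rwa [degree_comp (by rw [degree_linear hL']; exact zero_lt_one), degree_linear hL', mul_one]
  obtain ⟨n, hn⟩ := (Nat.modEq_iff_dvd' hmy).1 hmod.symm
  obtain rfl : m = y + n • L := by rw [smul_eq_mul, mul_comm, ← hn]; omega
  have hlin : (C (L : K)⁻¹ * X + C (-(y : K) / L) : K[X]).eval ((y + n • L : ℕ) : K) = n := by
    simp only [eval_add, eval_mul, eval_C, eval_X, smul_eq_mul]
    field_simp
    push_cast
    ring
  rw [shift_eq_sum_range_fwdDiff_iter u L y (fun j hj => fwdDiff_iter_eq_zero_of_le hu hj hy),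
    eval_comp, hlin, hp_eval]
  simp only [nsmul_eq_mul]

end Field

theorem exists_periodic_coeff_of_eval_mod {K : Type*} [CommRing K] {u : ℕ → K} {k L N : ℕ}
    (hL : 0 < L) (q : ℕ → K[X]) (hq : ∀ r, (q r).degree < k)
    (h : ∀ m ≥ N, u m = (q (m % L)).eval (m : K)) :
    ∃ a : Fin k → ℕ → K, (∀ i, ∃ p : ℕ, 0 < p ∧ ∀ m, a i (m + p) = a i m) ∧
      ∀ m ≥ N, u m = ∑ i : Fin k, a i m * (m : K) ^ (i : ℕ) := by
  refine ⟨fun i m => (q (m % L)).coeff i, fun i => ⟨L, hL, fun m => by simp⟩, fun m hm => ?_⟩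
  rw [h m hm, eval_eq_sum, ← sum_fin (fun e a => a * (m : K) ^ e) (fun i => zero_mul _) (hq _)]

/-- if `f : ℕ → ℕ` has generating series `Σ f(n) Zⁿ` equal to a rational
function `P(Z)/((1−Z^{n₁})⋯(1−Z^{n_k}))` with `P ∈ ℤ[Z]` (stated as an identity of formal
power series), then `f` is eventually a quasi-polynomial of degree at most `k−1`: there are
`N` and periodic functions `a₀,…,a_{k−1} : ℕ → ℚ` with
`f(n) = a_{k−1}(n)·n^{k−1} + ⋯ + a₀(n)` for all `n ≥ N`. -/
theorem eventually_quasiPolynomial_of_rational_gf (f : ℕ → ℕ) (k : ℕ)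
    (nn : Fin k → ℕ) (hnn : ∀ i, 0 < nn i) (P : Polynomial ℤ)
    (h : (PowerSeries.mk fun m => (f m : ℤ)) *
        ∏ i : Fin k, (1 - (PowerSeries.X : PowerSeries ℤ) ^ nn i)
      = (P : PowerSeries ℤ)) :
    ∃ (N : ℕ) (a : Fin k → ℕ → ℚ),
      (∀ i, ∃ p : ℕ, 0 < p ∧ ∀ m, a i (m + p) = a i m) ∧
      ∀ m ≥ N, (f m : ℚ) = ∑ i : Fin k, a i m * (m : ℚ) ^ (i : ℕ) := by
  set L := ∏ i, nn i
  have hL : 0 < L := prod_pos fun i _ => hnn i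
  obtain ⟨Q, hQ⟩ := PowerSeries.exists_mul_one_sub_X_pow_pow_eq_coe h
    fun i => dvd_prod_of_mem nn (mem_univ i)
  replace hQ := congrArg (PowerSeries.map (Int.castRingHom ℚ)) hQ
  simp only [Fintype.card_fin, map_mul, map_pow, map_sub, map_one, PowerSeries.map_X,
    ← Polynomial.polynomial_map_coe] at hQ
  set M := (Q.map (Int.castRingHom ℚ)).natDegree + 1
  have hΔ := PowerSeries.fwdDiff_iter_coeff_eq_zero_of_mul_eq_coe hQ
  choose q hq_deg hq_eval using fun r : ℕ => exists_degree_lt_eval_eq_of_fwdDiff_iter_eq_zero hL hΔ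
    (y := r + M * L) ((Nat.le_mul_of_pos_right M hL).trans le_add_self)
  refine ⟨(M + 1) * L, exists_periodic_coeff_of_eval_mod hL q hq_deg fun m hm => ?_⟩
  have hy : m % L + M * L ≤ m := by nlinarith [Nat.mod_lt m hL]
  simpa using hq_eval (m % L) m hy (by simp)
end

section
/- If f : ℕ → ℕ is non-decreasing and eventually a quasi-polynomial f(n) = a_k(n)n^k + ⋯ + a₀(n) of degree k (i.e., a_k is not eventually zero), then the leading coefficient function a_k(n) is eventually constant; consequently f(n) ∼ a n^k for some positive real a. -/
open Filter

private lemma per_mul {a : ℕ → ℝ} {p : ℕ} (hp : ∀ n, a (n + p) = a n) :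
    ∀ n m, a (n + m * p) = a n := by
  intro n m
  induction m with
  | zero => simp
  | succ m ih => rw [Nat.succ_mul, ← Nat.add_assoc, hp, ih]

private lemma per_bdd {a : ℕ → ℝ} {p : ℕ} (hp0 : 0 < p) (hp : ∀ n, a (n + p) = a n) :
    ∃ B : ℝ, ∀ n, |a n| ≤ B := by
  have hne : (Finset.range p).Nonempty := Finset.nonempty_range_iff.mpr hp0.ne'
  refine ⟨(Finset.range p).sup' hne (fun r => |a r|), fun n => ?_⟩
  have h1 : a n = a (n % p) := by
    conv_lhs => rw [← Nat.mod_add_div' n p]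
    exact per_mul hp _ _
  rw [h1]
  exact Finset.le_sup' (fun r => |a r|) (Finset.mem_range.mpr (Nat.mod_lt _ hp0))

private lemma tendsto_qp (k : ℕ) (b : Fin (k+1) → ℕ → ℝ)
    (hb : ∀ i, ∃ B : ℝ, ∀ n, |b i n| ≤ B) (c : ℝ) (hc : ∀ n, b (Fin.last k) n = c) :
    Tendsto (fun n : ℕ => (∑ i : Fin (k+1), b i n * (n:ℝ)^(i:ℕ)) / (n:ℝ)^k) atTop (nhds c) := by
  have hterm : ∀ i : Fin (k+1), Tendsto (fun n : ℕ => b i n * (n:ℝ)^(i:ℕ) / (n:ℝ)^k) atTop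
      (nhds (if i = Fin.last k then c else 0)) := by
    intro i
    by_cases hi : i = Fin.last k
    · subst hi
      simp only [if_pos rfl]
      have hk : ((Fin.last k : Fin (k+1)) : ℕ) = k := rfl
      refine Tendsto.congr' ?_ tendsto_const_nhds
      filter_upwards [eventually_ge_atTop 1] with n hn
      have hn0 : ((n:ℝ)) ≠ 0 := by
        have : (0:ℕ) < n := hn
        positivity
      rw [hk, mul_div_assoc, div_self (pow_ne_zero _ hn0), mul_one, hc]
      simp
    · simp only [if_neg hi]
      obtain ⟨B, hB⟩ := hb i
      have hik : (i:ℕ) < k := Fin.val_lt_last hi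
      have hB0 : 0 ≤ B := le_trans (abs_nonneg _) (hB 0)
      refine squeeze_zero_norm' (a := fun n : ℕ => B * (n:ℝ)⁻¹) ?_ ?_
      · filter_upwards [eventually_ge_atTop 1] with n hn
        have h1 : (1:ℝ) ≤ (n:ℝ) := by exact_mod_cast hn
        have hn0 : (0:ℝ) < (n:ℝ) := lt_of_lt_of_le one_pos h1
        have habs : ‖b i n * (n:ℝ)^(i:ℕ) / (n:ℝ)^k‖ = |b i n| * ((n:ℝ)^(i:ℕ) / (n:ℝ)^k) := by
          rw [Real.norm_eq_abs, abs_div, abs_mul, abs_pow, abs_pow,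
            abs_of_nonneg hn0.le, mul_div_assoc]
        rw [habs]
        have hkey : (n:ℝ)^(i:ℕ) / (n:ℝ)^k ≤ (n:ℝ)⁻¹ := by
          have hsplit : (n:ℝ)^k = (n:ℝ)^(i:ℕ) * (n:ℝ)^(k - (i:ℕ)) := by
            rw [← pow_add]
            congr 1
            omega
          rw [hsplit, div_mul_eq_div_div, div_self (by positivity), one_div]
          have h2 : (n:ℝ)^(1:ℕ) ≤ (n:ℝ)^(k - (i:ℕ)) :=
            pow_le_pow_right₀ h1 (by omega)
          rw [pow_one] at h2
          exact inv_anti₀ hn0 h2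
        exact mul_le_mul (hB n) hkey (by positivity) hB0
      · have h3 : Tendsto (fun n : ℕ => ((n:ℝ))⁻¹) atTop (nhds 0) :=
          tendsto_inv_atTop_zero.comp tendsto_natCast_atTop_atTop
        simpa using (tendsto_const_nhds (x := B)).mul h3
  have hsum := tendsto_finset_sum Finset.univ (fun i (_ : i ∈ Finset.univ) => hterm i)
  have hval : (∑ i : Fin (k+1), if i = Fin.last k then c else 0) = c := by simp
  rw [hval] at hsum
  exact hsum.congr fun n => (Finset.sum_div _ _ _).symm

private lemma tendsto_ratio (c d P : ℕ) (hP : 0 < P) (k : ℕ) :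
    Tendsto (fun m : ℕ => ((c + m * P : ℕ) : ℝ)^k / ((d + m * P : ℕ) : ℝ)^k) atTop (nhds 1) := by
  have hden : Tendsto (fun m : ℕ => ((d + m * P : ℕ) : ℝ)) atTop atTop := by
    apply tendsto_natCast_atTop_atTop.comp
    apply tendsto_atTop_mono (fun m => ?_) tendsto_id
    calc (id m : ℕ) = m * 1 := (Nat.mul_one m).symm
    _ ≤ m * P := Nat.mul_le_mul_left m hP
    _ ≤ d + m * P := Nat.le_add_left _ _
  have base : Tendsto (fun m : ℕ => ((c + m * P : ℕ) : ℝ) / ((d + m * P : ℕ) : ℝ)) atTop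
      (nhds 1) := by
    have h0 : Tendsto (fun m : ℕ => 1 + ((c:ℝ) - d) / ((d + m * P : ℕ) : ℝ)) atTop (nhds 1) := by
      have := Tendsto.div_atTop (tendsto_const_nhds (x := (c:ℝ) - (d:ℝ))) hden
      simpa using (tendsto_const_nhds (x := (1:ℝ))).add this
    refine h0.congr' ?_
    filter_upwards [eventually_ge_atTop 1] with m hm
    have hpos : (0:ℝ) < ((d + m * P : ℕ) : ℝ) := by
      have : 0 < d + m * P := Nat.lt_of_lt_of_le (Nat.mul_pos hm hP) (Nat.le_add_left _ _)
      exact_mod_cast this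
    have hne : ((d + m * P : ℕ) : ℝ) ≠ 0 := hpos.ne'
    push_cast
    push_cast at hne
    field_simp
    ring
  have := base.pow k
  rw [one_pow] at this
  exact this.congr fun m => div_pow _ _ _

/-- if `f : ℕ → ℕ` is non-decreasing and eventually equal to a quasi-polynomial
`f(n) = a_k(n)·n^k + ⋯ + a₀(n)` of degree `k` (the `aᵢ` periodic and `a_k` not eventually
zero), then the leading coefficient `a_k(n)` is eventually constant, and consequently
`f(n) ∼ a·n^k` for some positive real `a`. -/
theorem leading_coeff_eventually_constant (f : ℕ → ℕ) (hf : Monotone f) (k : ℕ)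
    (a : Fin (k + 1) → ℕ → ℝ)
    (hper : ∀ i, ∃ p : ℕ, 0 < p ∧ ∀ n, a i (n + p) = a i n)
    (N : ℕ) (heq : ∀ n ≥ N, (f n : ℝ) = ∑ i : Fin (k + 1), a i n * (n : ℝ) ^ (i : ℕ))
    (hdeg : ¬ ∃ M : ℕ, ∀ n ≥ M, a (Fin.last k) n = 0) :
    (∃ c : ℝ, ∃ M : ℕ, ∀ n ≥ M, a (Fin.last k) n = c) ∧
    ∃ c : ℝ, 0 < c ∧
      Tendsto (fun n : ℕ => (f n : ℝ) / (n : ℝ) ^ k) atTop (nhds c) := by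
  classical
  choose p hp0 hper' using hper
  set P : ℕ := ∏ i, p i with hPdef
  have hP : 0 < P := Finset.prod_pos (fun i _ => hp0 i)
  have hPer : ∀ i n, a i (n + P) = a i n := by
    intro i n
    obtain ⟨q, hq⟩ : p i ∣ P := Finset.dvd_prod_of_mem _ (Finset.mem_univ i)
    rw [hq, Nat.mul_comm, per_mul (hper' i)]
  have hPerM : ∀ i n m, a i (n + m * P) = a i n := fun i n m => per_mul (hPer i) n m
  -- the subsequence limits
  have hcomp : Tendsto (fun m : ℕ => m * P) atTop atTop := by
    apply tendsto_atTop_mono (fun m => ?_) tendsto_id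
    calc (id m : ℕ) = m * 1 := (Nat.mul_one m).symm
    _ ≤ m * P := Nat.mul_le_mul_left m hP
  have hA : ∀ n₀ : ℕ, Tendsto (fun m : ℕ => (f (n₀ + m * P) : ℝ) / ((n₀ + m * P : ℕ) : ℝ)^k)
      atTop (nhds (a (Fin.last k) n₀)) := by
    intro n₀
    have base := tendsto_qp k (fun i _ => a i n₀)
      (fun i => ⟨|a i n₀|, fun _ => le_refl _⟩) (a (Fin.last k) n₀) (fun _ => rfl)
    have hcomp' : Tendsto (fun m : ℕ => n₀ + m * P) atTop atTop :=
      tendsto_atTop_mono (fun m => Nat.le_add_left (m * P) n₀) hcomp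
    have hT := base.comp hcomp'
    refine hT.congr' ?_
    filter_upwards [hcomp'.eventually_ge_atTop N] with m hm
    have h2 : (f (n₀ + m * P) : ℝ)
        = ∑ i : Fin (k+1), a i n₀ * ((n₀ + m * P : ℕ) : ℝ)^(i:ℕ) := by
      rw [heq _ hm]
      exact Finset.sum_congr rfl fun i _ => by rw [hPerM i n₀ m]
    simp only [Function.comp]
    rw [h2]
  have hnn : ∀ n₀, 0 ≤ a (Fin.last k) n₀ := fun n₀ =>
    ge_of_tendsto (hA n₀) (Eventually.of_forall fun m => by positivity)
  -- monotonicity of the leading coefficient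
  have hmono : ∀ n₀ n₁ : ℕ, n₀ ≤ n₁ → a (Fin.last k) n₀ ≤ a (Fin.last k) n₁ := by
    intro n₀ n₁ h01
    have hr := tendsto_ratio n₀ n₁ P hP k
    have h1 : Tendsto (fun m : ℕ => (f (n₀ + m * P) : ℝ) / ((n₁ + m * P : ℕ) : ℝ)^k) atTop
        (nhds (a (Fin.last k) n₀)) := by
      have hmul := (hA n₀).mul hr
      rw [mul_one] at hmul
      refine hmul.congr' ?_
      filter_upwards [eventually_ge_atTop 1] with m hm
      have hx0 : (0:ℝ) < ((n₀ + m * P : ℕ) : ℝ) := by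
        have : 0 < n₀ + m * P := Nat.lt_of_lt_of_le (Nat.mul_pos hm hP) (Nat.le_add_left _ _)
        exact_mod_cast this
      have hxne : ((n₀ + m * P : ℕ) : ℝ)^k ≠ 0 := pow_ne_zero _ hx0.ne'
      field_simp
    have hle : ∀ᶠ m : ℕ in atTop,
        (f (n₀ + m * P) : ℝ) / ((n₁ + m * P : ℕ) : ℝ)^k
          ≤ (f (n₁ + m * P) : ℝ) / ((n₁ + m * P : ℕ) : ℝ)^k := by
      filter_upwards with m
      have hy : (0:ℝ) ≤ ((n₁ + m * P : ℕ) : ℝ)^k := by positivity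
      have hfle : ((f (n₀ + m * P) : ℕ) : ℝ) ≤ ((f (n₁ + m * P) : ℕ) : ℝ) := by
        exact_mod_cast hf (Nat.add_le_add_right h01 (m * P))
      exact div_le_div_of_nonneg_right hfle hy
    exact le_of_tendsto_of_tendsto h1 (hA n₁) hle
  set c := a (Fin.last k) 0 with hcdef
  have hconst : ∀ n, a (Fin.last k) n = c := by
    intro n
    have h1 : c ≤ a (Fin.last k) n := hmono 0 n (Nat.zero_le n)
    have h2 : a (Fin.last k) n ≤ a (Fin.last k) (0 + n * P) := by
      apply hmono
      have := Nat.mul_le_mul_left n hP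
      omega
    rw [hPerM (Fin.last k) 0 n] at h2
    exact le_antisymm h2 h1
  have hc0 : c ≠ 0 := fun h => hdeg ⟨0, fun n _ => by rw [hconst n, h]⟩
  have hcpos : 0 < c := (hnn 0).lt_of_ne (Ne.symm hc0)
  refine ⟨⟨c, 0, fun n _ => hconst n⟩, c, hcpos, ?_⟩
  have main := tendsto_qp k (fun i => a i) (fun i => per_bdd (hp0 i) (hper' i)) c hconst
  refine main.congr' ?_
  filter_upwards [eventually_ge_atTop N] with n hn
  rw [heq n hn]
end

section
/- Let R be an infinite relational structure whose profile φ_R takes finite values. Then φ_R is non-decreasing: φ_R(n) ≤ φ_R(n+1) for all n. -/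
/-- The space of isomorphism types of substructures of `R` induced on `n`-element subsets:
the quotient of the `n`-element finite subsets of the base set by induced isomorphism. -/
def ProfileSpace {E : Type*} (R : RelStruct E) (n : ℕ) : Type _ :=
  Quot fun A B : {A : Set E // A.Finite ∧ A.ncard = n} => R.Iso A.1 B.1

/-- The profile of `R`: the number of isomorphism types of `n`-element induced substructures. -/
noncomputable def profile {E : Type*} (R : RelStruct E) (n : ℕ) : ℕ :=
  Nat.card (ProfileSpace R n)

/-!
If `c` is a weight on the isomorphism types of `n`-element substructures and
`f A := c (type A)`, then the map sending `c` to `B ↦ ∑_{A ⊆ B, #A = n} f A` on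
`(n + 1)`-element sets is linear and factors through the isomorphism types of `B`. It is
injective, which gives `φ(n) ≤ φ(n + 1)`: if the sums vanish on all `(n + 1)`-sets, double
counting makes them vanish on all larger finite sets, and an inclusion–exclusion over the
subsets `T` of an `(n + 1)`-set `K` disjoint from `A` (it exists because `E` is infinite)
isolates `f A` in the vanishing sums over `A ∪ T`.
-/

namespace Finset

variable {α β : Type*}

theorem sum_powerset_ite_subset_neg_one_pow_card [DecidableEq α] {U K : Finset α} {x : α}
    (hxK : x ∈ K) (hxU : x ∉ U) : ∑ T ∈ K.powerset, (if U ⊆ T then (-1 : ℤ) ^ #T else 0) = 0 := by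
  rw [← insert_erase hxK, sum_powerset_insert (notMem_erase x K), ← sum_add_distrib]
  refine sum_eq_zero fun T hT => ?_
  have hxT : x ∉ T := fun h => notMem_erase x K (mem_powerset.mp hT h)
  simp only [subset_insert_iff_of_notMem hxU, card_insert_of_notMem hxT, pow_succ]
  split_ifs <;> ring

theorem sum_erase_sum_powersetCard [DecidableEq α] [AddCommMonoid β] (f : Finset α → β)
    (M : Finset α) (n : ℕ) :
    ∑ x ∈ M, ∑ A ∈ (M.erase x).powersetCard n, f A =
      (#M - n) • ∑ A ∈ M.powersetCard n, f A := by
  have hfilter : ∀ x, (M.erase x).powersetCard n = (M.powersetCard n).filter (x ∉ ·) := by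
    intro x; ext A; simp [subset_erase, and_assoc, and_comm]
  simp_rw [hfilter, sum_filter]
  rw [sum_comm, smul_sum]
  refine sum_congr rfl fun A hA => ?_
  obtain ⟨hAM, hAn⟩ := mem_powersetCard.mp hA
  rw [← sum_filter, sum_const, ← hAn, ← card_sdiff_of_subset hAM, filter_notMem_eq_sdiff]

theorem sum_powersetCard_eq_zero_of_succ_le [AddCommMonoid β] [IsAddTorsionFree β]
    {f : Finset α → β} {n : ℕ}
    (hf : ∀ B : Finset α, #B = n + 1 → ∑ A ∈ B.powersetCard n, f A = 0)
    {M : Finset α} (hM : n + 1 ≤ #M) : ∑ A ∈ M.powersetCard n, f A = 0 := by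
  classical
  obtain ⟨m, hm⟩ := Nat.exists_eq_add_of_le hM
  induction m generalizing M with
  | zero => exact hf M hm
  | succ m ih =>
    have hsum := sum_erase_sum_powersetCard f M n
    rw [sum_eq_zero fun x hx => ih (by grind) (by grind)] at hsum
    exact (nsmul_eq_zero_iff_right (by omega)).mp hsum.symm

theorem eq_zero_of_sum_powersetCard_union_eq_zero [DecidableEq α] [AddCommGroup β]
    {f : Finset α → β} {A K : Finset α} (hK : #A < #K)
    (hf : ∀ T ⊆ K, T.Nonempty → ∑ B ∈ (A ∪ T).powersetCard #A, f B = 0) : f A = 0 := by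
  -- Sum the hypotheses with signs `(-1) ^ #T` over all `T ⊆ K`: only `T = ∅` contributes,
  -- while each `B` gets total weight `∑ T ∈ Icc (B \ A) K, (-1) ^ #T = 0`, as `B \ A ≠ K`.
  have hrestrict : ∀ T ⊆ K, (A ∪ T).powersetCard #A =
      ((A ∪ K).powersetCard #A).filter (· ⊆ A ∪ T) := by
    intro T hT; ext B
    simp only [mem_powersetCard, mem_filter]
    exact ⟨fun h => ⟨⟨h.1.trans (union_subset_union_right hT), h.2⟩, h.1⟩,
      fun h => ⟨h.2, h.1.2⟩⟩
  have hsingle :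
      ∑ T ∈ K.powerset, (-1 : ℤ) ^ #T • ∑ B ∈ (A ∪ T).powersetCard #A, f B = f A := by
    rw [sum_eq_single_of_mem ∅ (empty_mem_powerset K)]
    · simp [powersetCard_self]
    · intro T hT hT0
      rw [hf T (mem_powerset.mp hT) (nonempty_iff_ne_empty.mpr hT0), smul_zero]
  have hcancel :
      ∑ T ∈ K.powerset, (-1 : ℤ) ^ #T • ∑ B ∈ (A ∪ T).powersetCard #A, f B = 0 := by
    rw [sum_congr rfl fun T hT => by rw [hrestrict T (mem_powerset.mp hT), sum_filter, smul_sum],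
      sum_comm]
    refine sum_eq_zero fun B hB => ?_
    have hBA : #(B \ A) < #K := (card_le_card sdiff_subset).trans_lt <| by
      rwa [(mem_powersetCard.mp hB).2]
    obtain ⟨x, hxK, hxB⟩ := exists_mem_notMem_of_card_lt_card hBA
    calc ∑ T ∈ K.powerset, (-1 : ℤ) ^ #T • (if B ⊆ A ∪ T then f B else 0)
        = ∑ T ∈ K.powerset, (if B \ A ⊆ T then (-1 : ℤ) ^ #T else 0) • f B := by
          refine sum_congr rfl fun T _ => ?_
          simp only [show B \ A ⊆ T ↔ B ⊆ A ∪ T from sdiff_le_iff]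
          split_ifs <;> simp
      _ = 0 := by rw [← sum_smul, sum_powerset_ite_subset_neg_one_pow_card hxK hxB, zero_smul]
  rw [← hsingle, hcancel]

theorem eq_zero_of_sum_powersetCard_succ_eq_zero [Infinite α] [AddCommGroup β]
    [IsAddTorsionFree β] {f : Finset α → β} {n : ℕ}
    (hf : ∀ B : Finset α, #B = n + 1 → ∑ A ∈ B.powersetCard n, f A = 0)
    {A : Finset α} (hA : #A = n) : f A = 0 := by
  classical
  obtain ⟨K, hKA, hK⟩ := A.finite_toSet.infinite_compl.exists_subset_card_eq (n + 1)
  have hdisj : Disjoint A K := disjoint_coe.mp (disjoint_compl_right.mono_right hKA)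
  refine eq_zero_of_sum_powersetCard_union_eq_zero (K := K) (by omega) fun T hTK hT => ?_
  refine hA ▸ sum_powersetCard_eq_zero_of_succ_le hf ?_
  rw [card_union_of_disjoint (hdisj.mono_right hTK)]
  have := hT.card_pos
  omega

end Finset

open Finset

namespace RelStruct

variable {E : Type*}

theorem Iso.exists_injOn {R : RelStruct E} {A B : Set E} (h : R.Iso A B) :
    ∃ g : E → E, Set.InjOn g A ∧ g '' A = B ∧
      ∀ i (v : Fin (R.arity i) → E), (∀ j, v j ∈ A) →
        (R.rel i v ↔ R.rel i (g ∘ v)) := by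
  obtain ⟨e, he⟩ := h
  set g : E → E := Function.extend Subtype.val (fun x : A => (e x : E)) id
  have hg : ∀ x : A, g x = e x := Subtype.val_injective.extend_apply _ _
  refine ⟨g, fun x hx y hy hxy => ?_, ?_, fun i v hv => ?_⟩
  · exact Subtype.ext_iff.mp <|
      e.injective (Subtype.ext (by simpa only [hg ⟨x, hx⟩, hg ⟨y, hy⟩] using hxy))
  · ext y
    refine ⟨?_, fun hy => ⟨e.symm ⟨y, hy⟩, (e.symm ⟨y, hy⟩).2, by simp [hg]⟩⟩
    rintro ⟨x, hx, rfl⟩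
    simp [hg ⟨x, hx⟩]
  · convert he i (fun j => ⟨v j, hv j⟩) using 2
    ext j
    exact hg ⟨v j, hv j⟩

variable (R : RelStruct E)

theorem iso_image_of_injOn {A : Set E} {g : E → E} (hg : Set.InjOn g A)
    (hrel : ∀ i (v : Fin (R.arity i) → E), (∀ j, v j ∈ A) →
      (R.rel i v ↔ R.rel i (g ∘ v))) :
    R.Iso A (g '' A) :=
  ⟨hg.bijOn_image.equiv g, fun i v => hrel i (fun j => v j) fun j => (v j).2⟩

def isoType {n : ℕ} (A : Finset E) (hA : #A = n) : ProfileSpace R n :=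
  Quot.mk _ ⟨A, A.finite_toSet, by rw [Set.ncard_coe_finset, hA]⟩

def typeWeight {β : Type*} [Zero β] {n : ℕ} (c : ProfileSpace R n → β) (A : Finset E) : β :=
  if h : #A = n then c (R.isoType A h) else 0

theorem sum_typeWeight_eq_of_iso {β : Type*} [AddCommMonoid β] {n : ℕ}
    (c : ProfileSpace R n → β) {M N : Finset E} (h : R.Iso M N) :
    ∑ A ∈ M.powersetCard n, R.typeWeight c A =
      ∑ A ∈ N.powersetCard n, R.typeWeight c A := by
  classical
  obtain ⟨g, hg, hgM, hrel⟩ := h.exists_injOn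
  obtain rfl : N = M.image g := coe_injective (by rw [coe_image, hgM])
  have hgA : ∀ A ∈ M.powersetCard n, Set.InjOn g A := fun A hA =>
    hg.mono (coe_subset.mpr (mem_powersetCard.mp hA).1)
  refine sum_nbij (·.image g) (fun A hA => ?_) (fun A hA A' hA' hAA' => ?_) (fun B hB => ?_)
    (fun A hA => ?_)
  · obtain ⟨hAM, hAn⟩ := mem_powersetCard.mp hA
    exact mem_powersetCard.mpr
      ⟨image_subset_image hAM, by rw [card_image_of_injOn (hgA A hA), hAn]⟩
  · rw [← coe_inj, ← hg.image_eq_image_iff (coe_subset.mpr (mem_powersetCard.mp hA).1)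
      (coe_subset.mpr (mem_powersetCard.mp hA').1), ← coe_image, ← coe_image]
    exact congrArg _ hAA'
  · obtain ⟨hBM, hBn⟩ := mem_powersetCard.mp hB
    obtain ⟨A, hAM, rfl⟩ := subset_image_iff.mp hBM
    have hA : A ∈ M.powersetCard n := mem_powersetCard.mpr
      ⟨hAM, by rwa [card_image_of_injOn (hg.mono (coe_subset.mpr hAM))] at hBn⟩
    exact ⟨A, hA, rfl⟩
  · have hAn := (mem_powersetCard.mp hA).2
    have hgAn : #(A.image g) = n := by rw [card_image_of_injOn (hgA A hA), hAn]
    have hiso : R.Iso A (A.image g) := by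
      rw [coe_image]
      exact R.iso_image_of_injOn (hgA A hA) fun i v hv =>
        hrel i v fun j => (mem_powersetCard.mp hA).1 (hv j)
    simp only [typeWeight, dif_pos hAn, dif_pos hgAn]
    exact congrArg c (Quot.sound hiso)

/-- Dual to multiplication by `e = ∑ a ∈ E, {a}` in Cameron's age algebra: a weight `c` on
`n`-types is sent to the weight of an `(n + 1)`-type obtained by summing `c` over the types of its
`n`-element substructures. -/
noncomputable def restrictionSum (K : Type*) [Semiring K] (n : ℕ) :
    (ProfileSpace R n → K) →ₗ[K] (ProfileSpace R (n + 1) → K) where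
  toFun c σ := Quot.lift (fun B => ∑ A ∈ B.2.1.toFinset.powersetCard n, R.typeWeight c A)
    (fun B B' h => R.sum_typeWeight_eq_of_iso c (by simpa using h)) σ
  map_add' c c' := by
    ext σ
    induction σ using Quot.ind
    refine (sum_congr rfl fun A _ => ?_).trans sum_add_distrib
    unfold typeWeight
    split_ifs <;> simp
  map_smul' a c := by
    ext σ
    induction σ using Quot.ind
    change _ = a • ∑ A ∈ _, R.typeWeight c A
    refine (sum_congr rfl fun A _ => ?_).trans smul_sum.symm
    unfold typeWeight
    split_ifs <;> simp

theorem restrictionSum_isoType (K : Type*) [Semiring K] {n : ℕ} (c : ProfileSpace R n → K)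
    (B : Finset E) (hB : #B = n + 1) :
    R.restrictionSum K n c (R.isoType B hB) = ∑ A ∈ B.powersetCard n, R.typeWeight c A := by
  simp [restrictionSum, isoType]

theorem restrictionSum_injective [Infinite E] (K : Type*) [Ring K] [IsAddTorsionFree K] (n : ℕ) :
    Function.Injective (R.restrictionSum K n) := by
  classical
  refine (injective_iff_map_eq_zero _).mpr fun c hc => ?_
  have hsum : ∀ B : Finset E, #B = n + 1 → ∑ A ∈ B.powersetCard n, R.typeWeight c A = 0 :=
    fun B hB => by rw [← R.restrictionSum_isoType K c B hB, hc, Pi.zero_apply]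
  ext σ
  induction σ using Quot.ind with
  | mk A =>
    have hA : #A.2.1.toFinset = n := by rw [← Set.ncard_eq_toFinset_card _ A.2.1, A.2.2]
    have := eq_zero_of_sum_powersetCard_succ_eq_zero hsum hA
    show c _ = 0
    simpa [typeWeight, hA, isoType] using this

end RelStruct

/-- the profile of an infinite relational structure taking finite values is
non-decreasing: `φ_R(n) ≤ φ_R(n+1)` for all `n`. -/
theorem profile_monotone {E : Type*} [Infinite E] (R : RelStruct E)
    (hfin : ∀ n : ℕ, Finite (ProfileSpace R n)) :
    ∀ n : ℕ, profile R n ≤ profile R (n + 1) := by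
  intro n
  have := hfin n
  have := hfin (n + 1)
  have := Fintype.ofFinite (ProfileSpace R n)
  have := Fintype.ofFinite (ProfileSpace R (n + 1))
  simpa [profile, Nat.card_eq_fintype_card, Module.finrank_fintype_fun_eq_card] using
    LinearMap.finrank_le_finrank_of_injective (R.restrictionSum_injective ℚ n)
end

section
/- Let R be the relational structure on the leaf set E of the infinite ordered tree T (each internal node of T has infinitely many children, alternating leaves and copies of T), consisting of the infix linear order on leaves and the three ternary relations recording the 3-leaf contraction type. Then the minimal monomorphic decomposition of R is the partition into singletons: no two-element subset of E is a monomorphic part of R. -/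
/-- The leaves of the infinite rooted ordered tree `T` in which every internal node has
infinitely many children, alternately a leaf (at the even child positions `2k`) and a copy of
`T` (at the odd child positions `2j+1`): a leaf is encoded by the list of successive
subtree-children chosen, together with the final leaf-child index. -/
def TreeLeaf : Type := List ℕ × ℕ

/-- The path of child indices from the root of `T` to a leaf. -/
def leafPath (x : TreeLeaf) : List ℕ := x.1.map (fun j => 2 * j + 1) ++ [2 * x.2]

/-- The left-to-right infix order on the leaves of `T`: lexicographic order on paths. -/
def leafLt (x y : TreeLeaf) : Prop := List.Lex (· < ·) (leafPath x) (leafPath y)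

/-- Length of the longest common prefix of two lists (the depth of the meet of two leaves). -/
def cpl : List ℕ → List ℕ → ℕ
  | a :: s, b :: t => if a = b then cpl s t + 1 else 0
  | _, _ => 0

/-- The relational structure `R` on the leaves of `T`: the infix linear order `<`, together
with, for each of the three reduced trees with `3` leaves, the ternary relation holding on the
triples `x < y < z` whose contraction `T|{x,y,z}` is that tree.  For `x < y < z`, the
contraction is `(∘,(∘,∘))`, `(∘,∘,∘)` or `((∘,∘),∘)` according to whether the meet of `x,y` is
strictly higher than, at the same depth as, or strictly deeper than the meet of `y,z`. -/
def treeStruct : RelStruct TreeLeaf where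
  ι := Option (Fin 3)
  arity := fun i => match i with | none => 2 | some _ => 3
  rel := fun i => match i with
    | none => fun v => leafLt (v 0) (v 1)
    | some t => fun v => leafLt (v 0) (v 1) ∧ leafLt (v 1) (v 2) ∧
        (if t = 0 then
          cpl (leafPath (v 0)) (leafPath (v 1)) < cpl (leafPath (v 1)) (leafPath (v 2))
        else if t = 1 then
          cpl (leafPath (v 0)) (leafPath (v 1)) = cpl (leafPath (v 1)) (leafPath (v 2))
        else
          cpl (leafPath (v 0)) (leafPath (v 1)) > cpl (leafPath (v 1)) (leafPath (v 2)))

/-! For leaves `a < b` we exhibit leaves `c, d ∉ {a, b}` such that `{a, c, d}` and `{b, c, d}`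
carry different contraction types, so no monomorphic part contains both `a` and `b`.  Where `b`
is a child of the meet of `a` and `b`, the first two leaves `c < d` of the subtree right after
`a` work: `a < c < d < b` and the meet of `c, d` lies strictly below those of `a, c` and of
`d, b`.  Where `b` lies inside a subtree below that meet, the first leaves `c < d` of the two
subtrees right after `b` work: `a < b < c < d`, and `T|{b,c,d}` is flat while `T|{a,c,d}` is
not.  (The order is not dense, so one cannot always pick `c, d` between `a` and `b`.) -/

namespace RelStruct

theorem Iso.exists_rel {E : Type*} {R : RelStruct E} {A B : Set E} (h : R.Iso A B) {i : R.ι}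
    {v : Fin (R.arity i) → A} (hv : R.rel i (fun j => v j)) :
    ∃ w : Fin (R.arity i) → B, R.rel i (fun j => w j) :=
  let ⟨e, he⟩ := h
  ⟨e ∘ v, (he i v).mp hv⟩

end RelStruct

theorem IsMonoPart.iso_insert {E : Type*} {R : RelStruct E} {F S : Set E} {a b : E}
    (hF : IsMonoPart R F) (ha : a ∈ F) (hb : b ∈ F) (haS : a ∉ S) (hbS : b ∉ S)
    (hS : S.Finite) : R.Iso (insert a S) (insert b S) :=
  hF _ _ (hS.insert a) (hS.insert b)
    (by rw [Set.ncard_insert_of_notMem haS hS, Set.ncard_insert_of_notMem hbS hS])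
    (by rw [Set.insert_sdiff_of_mem _ ha, Set.insert_sdiff_of_mem _ hb])

theorem eq_of_lt_of_lt_of_mem_triple {α : Type*} [Preorder α] {x y z u v w : α}
    (hxy : x < y) (hyz : y < z) (hu : u ∈ ({x, y, z} : Set α)) (hv : v ∈ ({x, y, z} : Set α))
    (hw : w ∈ ({x, y, z} : Set α)) (huv : u < v) (hvw : v < w) : u = x ∧ v = y ∧ w = z := by
  simp only [Set.mem_insert_iff, Set.mem_singleton_iff] at hu hv hw
  rcases hu with rfl | rfl | rfl <;> rcases hv with rfl | rfl | rfl <;>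
    rcases hw with rfl | rfl | rfl <;> first | exact ⟨rfl, rfl, rfl⟩ | (exfalso; order)

theorem List.Lex.prefix_or_exists_append_cons {α : Type*} {r : α → α → Prop} {p q : List α}
    (h : List.Lex r p q) : p <+: q ∨ ∃ s i u j v, p = s ++ i :: u ∧ q = s ++ j :: v ∧ r i j := by
  induction h with
  | nil => exact .inl (List.nil_prefix)
  | cons _ ih =>
    rcases ih with hpre | ⟨s, i, u, j, v, rfl, rfl, hij⟩
    · exact .inl (List.cons_prefix_cons.mpr ⟨rfl, hpre⟩)
    · exact .inr ⟨_ :: s, i, u, j, v, rfl, rfl, hij⟩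
  | rel hij => exact .inr ⟨[], _, _, _, _, rfl, rfl, hij⟩

theorem cpl_append_cons {s u v : List ℕ} {i j : ℕ} (h : i ≠ j) :
    cpl (s ++ i :: u) (s ++ j :: v) = s.length := by
  induction s with
  | nil => simp [cpl, h]
  | cons a s ih => simp [cpl, ih]

namespace TreeLeaf

/-- The path from the root to the internal node whose child is the leaf `z`. -/
def nodePath (z : TreeLeaf) : List ℕ := z.1.map (2 * · + 1)

theorem leafPath_eq_nodePath_append (z : TreeLeaf) : leafPath z = nodePath z ++ [2 * z.2] := rfl

theorem exists_leafPath_eq_nodePath_append (z : TreeLeaf) (j k : ℕ) :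
    ∃ c : TreeLeaf, leafPath c = nodePath z ++ [2 * j + 1, 2 * k] :=
  ⟨(z.1 ++ [j], k), by simp [leafPath, nodePath]⟩

theorem leafPath_eq_append_cons {z : TreeLeaf} {s u : List ℕ} {i : ℕ}
    (h : leafPath z = s ++ i :: u) :
    (∃ w, nodePath z = s ++ i :: w) ∨ (nodePath z = s ∧ i = 2 * z.2) := by
  rw [leafPath_eq_nodePath_append, List.append_eq_append_iff] at h
  rcases h with ⟨as, hs, h⟩ | ⟨bs, hz, h⟩
  · rcases as with _ | ⟨_, _⟩ <;> simp_all
  · rcases List.cons_eq_append_iff.mp h with ⟨rfl, h⟩ | ⟨w, rfl, -⟩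
    · simp_all
    · exact .inl ⟨w, hz⟩

theorem leafPath_injective : Function.Injective leafPath := by
  intro z z' h
  rw [leafPath_eq_nodePath_append, leafPath_eq_nodePath_append] at h
  obtain ⟨hl, hn⟩ := List.append_inj h (by simpa using congrArg List.length h)
  exact Prod.ext (List.map_injective_iff.mpr (fun _ _ h => by omega) hl) (by simpa using hn)

instance : LinearOrder TreeLeaf := LinearOrder.lift' leafPath leafPath_injective

def meetDepth (x y : TreeLeaf) : ℕ := cpl (leafPath x) (leafPath y)

theorem lt_and_meetDepth_eq_of_leafPath {x y : TreeLeaf} {s u v : List ℕ} {i j : ℕ}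
    (hx : leafPath x = s ++ i :: u) (hy : leafPath y = s ++ j :: v) (hij : i < j) :
    x < y ∧ meetDepth x y = s.length := by
  refine ⟨?_, ?_⟩
  · change List.Lex _ (leafPath x) (leafPath y)
    rw [hx, hy]
    exact List.Lex.append_left _ (.rel hij) s
  · rw [meetDepth, hx, hy, cpl_append_cons hij.ne]

theorem eq_of_leafPath_prefix {x y : TreeLeaf} (h : leafPath x <+: leafPath y) : x = y := by
  obtain ⟨t, ht⟩ := h
  rw [leafPath_eq_nodePath_append x, List.append_assoc, List.singleton_append] at ht
  rcases leafPath_eq_append_cons ht.symm with ⟨w, hw⟩ | ⟨hxy, hn⟩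
  · have hmem : 2 * x.2 ∈ nodePath y := by simp [hw]
    obtain ⟨k, -, hk⟩ := List.mem_map.mp hmem
    omega
  · exact leafPath_injective
      (by rw [leafPath_eq_nodePath_append, leafPath_eq_nodePath_append, hxy, hn])

theorem exists_leafPath_eq_append_cons_of_lt {x y : TreeLeaf} (h : x < y) :
    ∃ s i u j v, leafPath x = s ++ i :: u ∧ leafPath y = s ++ j :: v ∧ i < j :=
  (List.Lex.prefix_or_exists_append_cons h).resolve_left fun hpre =>
    h.ne (eq_of_leafPath_prefix hpre)

theorem treeStruct_rel_of_iso {x y z x' y' z' : TreeLeaf} (hxy' : x' < y') (hyz' : y' < z')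
    (h : treeStruct.Iso {x, y, z} {x', y', z'}) (t : Fin 3)
    (hrel : treeStruct.rel (some t) ![x, y, z]) : treeStruct.rel (some t) ![x', y', z'] := by
  let v : Fin 3 → ({x, y, z} : Set TreeLeaf) := ![⟨x, by simp⟩, ⟨y, by simp⟩, ⟨z, by simp⟩]
  obtain ⟨w, hw⟩ := h.exists_rel (i := some t) (v := v) hrel
  obtain ⟨h01, h12, -⟩ := id hw
  obtain ⟨e0, e1, e2⟩ := eq_of_lt_of_lt_of_mem_triple hxy' hyz'
    (w (0 : Fin 3)).2 (w (1 : Fin 3)).2 (w (2 : Fin 3)).2 h01 h12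
  have hw' : treeStruct.rel (some t)
      ![(w (0 : Fin 3) : TreeLeaf), w (1 : Fin 3), w (2 : Fin 3)] := hw
  rwa [e0, e1, e2] at hw'

variable {F : Set TreeLeaf} {a b c d : TreeLeaf}

theorem not_isMonoPart_of_between (ha : a ∈ F) (hb : b ∈ F) (hac : a < c) (hcd : c < d)
    (hdb : d < b) (hacd : meetDepth a c < meetDepth c d) (hdbc : meetDepth d b < meetDepth c d) :
    ¬ IsMonoPart treeStruct F := fun hF => by
  have hiso : treeStruct.Iso {a, c, d} {c, d, b} := by
    rw [Set.pair_comm d b, Set.insert_comm c b]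
    exact hF.iso_insert ha hb (by simp [hac.ne, (hac.trans hcd).ne])
      (by simp [(hcd.trans hdb).ne', hdb.ne']) (Set.toFinite _)
  exact lt_asymm hdbc (treeStruct_rel_of_iso hcd hdb hiso 0 ⟨hac, hcd, hacd⟩).2.2

theorem not_isMonoPart_of_right (ha : a ∈ F) (hb : b ∈ F) (hab : a < b) (hbc : b < c)
    (hcd : c < d) (hbcd : meetDepth b c = meetDepth c d) (hacd : meetDepth a c ≠ meetDepth c d) :
    ¬ IsMonoPart treeStruct F := fun hF =>
  have hac := hab.trans hbc
  hacd (treeStruct_rel_of_iso hac hcd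
    (hF.iso_insert hb ha (by simp [hbc.ne, (hbc.trans hcd).ne])
      (by simp [hac.ne, (hac.trans hcd).ne]) (Set.toFinite _)) 1 ⟨hbc, hcd, hbcd⟩).2.2

theorem not_isMonoPart_of_diverge_at_child {s u v : List ℕ} {i n : ℕ} (ha : a ∈ F)
    (hb : b ∈ F) (hpa : leafPath a = s ++ i :: u) (hpb : leafPath b = s ++ 2 * n :: v)
    (hin : i < 2 * n) : ¬ IsMonoPart treeStruct F := by
  obtain ⟨c, hpc⟩ := exists_leafPath_eq_nodePath_append a a.2 0
  obtain ⟨d, hpd⟩ := exists_leafPath_eq_nodePath_append a a.2 1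
  obtain ⟨hac, hac'⟩ :=
    lt_and_meetDepth_eq_of_leafPath (leafPath_eq_nodePath_append a) hpc (by omega)
  have hpc' : leafPath c = (nodePath a ++ [2 * a.2 + 1]) ++ [0] := by rw [hpc]; simp
  have hpd' : leafPath d = (nodePath a ++ [2 * a.2 + 1]) ++ [2] := by rw [hpd]; simp
  obtain ⟨hcd, hcd'⟩ := lt_and_meetDepth_eq_of_leafPath hpc' hpd' (by omega)
  have hdb : d < b ∧ meetDepth d b ≤ (nodePath a).length := by
    rcases leafPath_eq_append_cons hpa with ⟨w, hna⟩ | ⟨hna, rfl⟩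
    · obtain ⟨hdb, hdb'⟩ := lt_and_meetDepth_eq_of_leafPath (u := w ++ [2 * a.2 + 1, 2 * 1])
        (by rw [hpd, hna]; simp) hpb hin
      exact ⟨hdb, by simp [hdb', hna]⟩
    · obtain ⟨hdb, hdb'⟩ := lt_and_meetDepth_eq_of_leafPath (by rw [hpd, hna]) hpb (by omega)
      exact ⟨hdb, by simp [hdb', hna]⟩
  simp only [List.length_append, List.length_singleton] at hcd'
  exact not_isMonoPart_of_between ha hb hac hcd hdb.1 (by omega) (by omega)

theorem not_isMonoPart_of_diverge_above {s u w : List ℕ} {i j : ℕ} (ha : a ∈ F) (hb : b ∈ F)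
    (hab : a < b) (hpa : leafPath a = s ++ i :: u) (hnb : nodePath b = s ++ j :: w)
    (hij : i < j) : ¬ IsMonoPart treeStruct F := by
  obtain ⟨c, hpc⟩ := exists_leafPath_eq_nodePath_append b b.2 0
  obtain ⟨d, hpd⟩ := exists_leafPath_eq_nodePath_append b (b.2 + 1) 0
  obtain ⟨hbc, hbc'⟩ :=
    lt_and_meetDepth_eq_of_leafPath (leafPath_eq_nodePath_append b) hpc (by omega)
  obtain ⟨hcd, hcd'⟩ := lt_and_meetDepth_eq_of_leafPath hpc hpd (by omega)
  have hac' := (lt_and_meetDepth_eq_of_leafPath (v := w ++ [2 * b.2 + 1, 2 * 0]) hpa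
    (by rw [hpc, hnb]; simp) hij).2
  have hlen : s.length < (nodePath b).length := by simp [hnb]
  exact not_isMonoPart_of_right ha hb hab hbc hcd (hbc'.trans hcd'.symm) (by omega)

theorem not_isMonoPart_of_lt (ha : a ∈ F) (hb : b ∈ F) (hab : a < b) :
    ¬ IsMonoPart treeStruct F := by
  obtain ⟨s, i, u, j, v, hpa, hpb, hij⟩ := exists_leafPath_eq_append_cons_of_lt hab
  rcases leafPath_eq_append_cons hpb with ⟨w, hnb⟩ | ⟨-, rfl⟩
  · exact not_isMonoPart_of_diverge_above ha hb hab hpa hnb hij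
  · exact not_isMonoPart_of_diverge_at_child ha hb hpa hpb hij

end TreeLeaf

/-- the minimal monomorphic decomposition of the relational structure on the
leaves of the infinite tree `T` is the partition into singletons: every monomorphic part is a
subsingleton; in particular no two-element subset of the base set is a monomorphic part. -/
theorem treeStruct_monoParts_trivial :
    (∀ F : Set TreeLeaf, IsMonoPart treeStruct F → F.Subsingleton) ∧
    (∀ a b : TreeLeaf, a ≠ b → ¬ IsMonoPart treeStruct {a, b}) := by
  have subsingleton : ∀ F : Set TreeLeaf, IsMonoPart treeStruct F → F.Subsingleton :=
    fun F hF a ha b hb => by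
      by_contra hab
      rcases lt_or_gt_of_ne hab with h | h
      exacts [TreeLeaf.not_isMonoPart_of_lt ha hb h hF, TreeLeaf.not_isMonoPart_of_lt hb ha h hF]
  exact ⟨subsingleton, fun a b hab hF => hab (subsingleton _ hF (by simp) (by simp))⟩
end

section
/- In the set algebra over an infinite set E (the graded algebra ⊕_n K^{[E]^n} with product (fg)(A) = Σ_{A = A₁ ⊎ A₂} f(A₁)g(A₂)), the product of two R-invariant functions is R-invariant, for any relational structure R on E; hence the R-invariant functions form a graded subalgebra. -/
/-- `f : Set E → K`, viewed as a map on the `m`-element subsets of `E`, is `R`-invariant if it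
takes the same value on any two `m`-element subsets inducing isomorphic substructures. -/
def RInvariant {E K : Type*} (R : RelStruct E) (m : ℕ) (f : Set E → K) : Prop :=
  ∀ A A' : Set E, A.Finite → A'.Finite → A.ncard = m → A'.ncard = m →
    R.Iso A A' → f A = f A'

/-- The product in the set algebra of `f` (of degree `m`) and `g`, evaluated on a set `A`:
`(fg)(A) = Σ_{A = A₁ ⊎ A₂, |A₁| = m} f(A₁)·g(A₂)`. -/
noncomputable def setAlgebraMul {E K : Type*} [Field K] (m : ℕ) (f g : Set E → K)
    (A : Set E) : K :=
  ∑ᶠ B ∈ {B : Set E | B ⊆ A ∧ B.ncard = m}, f B * g (A \ B)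

/-!
An isomorphism `R|A ≅ R|A'` extends to a map `F : E → E` which is a bijection `A → A'` preserving
the relations of `R` on `A`. The image map `B ↦ F '' B` is then a bijection between the
decompositions `A = B ⊎ (A \ B)` and `A' = B' ⊎ (A' \ B')` with `|B| = |B'| = m`, it satisfies
`F '' (A \ B) = A' \ F '' B`, and it restricts to isomorphisms `R|B ≅ R|F '' B`. Invariance of `f`
and `g` therefore makes the two sums defining `(fg)(A)` and `(fg)(A')` agree term by term.
-/

open Set

namespace RelStruct

variable {E : Type*} (R : RelStruct E)

def PreservesOn (F : E → E) (A : Set E) : Prop :=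
  ∀ (i : R.ι) (v : Fin (R.arity i) → E), (∀ j, v j ∈ A) → (R.rel i v ↔ R.rel i (F ∘ v))

variable {R}

theorem PreservesOn.mono {F : E → E} {A B : Set E} (hR : R.PreservesOn F A) (hBA : B ⊆ A) :
    R.PreservesOn F B :=
  fun i v hv => hR i v fun j => hBA (hv j)

theorem iso_image_of_injOn_s19 {F : E → E} {B : Set E} (hF : InjOn F B) (hR : R.PreservesOn F B) :
    R.Iso B (F '' B) :=
  ⟨Equiv.Set.imageOfInjOn F B hF, fun i v => hR i (fun j => v j) fun j => (v j).2⟩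

theorem Iso.exists_bijOn {A A' : Set E} (h : R.Iso A A') :
    ∃ F : E → E, BijOn F A A' ∧ R.PreservesOn F A := by
  obtain ⟨e, he⟩ := h
  set F : E → E := Function.extend Subtype.val (fun a : A => (e a : E)) id
  have hF : ∀ a : A, F a = e a := Subtype.val_injective.extend_apply _ _
  refine ⟨F, ⟨fun x hx => ?_, fun x hx y hy hxy => ?_, fun y hy => ?_⟩, fun i v hv => ?_⟩
  · rw [hF ⟨x, hx⟩]
    exact (e _).2
  · rw [hF ⟨x, hx⟩, hF ⟨y, hy⟩] at hxy
    exact congrArg Subtype.val (e.injective (Subtype.ext hxy))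
  · exact ⟨e.symm ⟨y, hy⟩, (e.symm _).2, by rw [hF, Equiv.apply_symm_apply]⟩
  · convert he i fun j => ⟨v j, hv j⟩ using 2
    funext j
    exact hF ⟨v j, hv j⟩

end RelStruct

theorem RInvariant.apply_image {E K : Type*} {R : RelStruct E} {k : ℕ} {f : Set E → K}
    (hf : RInvariant R k f) {F : E → E} {B : Set E} (hF : InjOn F B) (hR : R.PreservesOn F B)
    (hB : B.Finite) (hk : B.ncard = k) : f (F '' B) = f B :=
  (hf B (F '' B) hB (hB.image F) hk (hF.ncard_image ▸ hk)
    (RelStruct.iso_image_of_injOn_s19 hF hR)).symm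

theorem Set.BijOn.image_setOf_subset_ncard_eq {α β : Type*} {F : α → β} {A : Set α} {A' : Set β}
    (hF : BijOn F A A') (m : ℕ) :
    BijOn (image F) {B | B ⊆ A ∧ B.ncard = m} {B | B ⊆ A' ∧ B.ncard = m} := by
  refine ⟨fun B ⟨hB, hBm⟩ => ⟨?_, ?_⟩, hF.injOn.image.mono fun B hB => hB.1,
    fun B' ⟨hB', hB'm⟩ => ?_⟩
  · exact hF.image_eq ▸ image_mono hB
  · rw [(hF.injOn.mono hB).ncard_image, hBm]
  · have hB'eq : F '' (A ∩ F ⁻¹' B') = B' := by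
      rw [image_inter_preimage, hF.image_eq, inter_eq_right.mpr hB']
    refine ⟨A ∩ F ⁻¹' B', ⟨inter_subset_left, ?_⟩, hB'eq⟩
    rw [← (hF.injOn.mono inter_subset_left).ncard_image, hB'eq, hB'm]

theorem setAlgebraMul_eq_of_bijOn {E K : Type*} [Field K] {m n : ℕ} {f g : Set E → K}
    {F : E → E} {A A' : Set E} (hF : BijOn F A A') (hA : A.Finite) (hcard : A.ncard = m + n)
    (hf : ∀ B ⊆ A, B.ncard = m → f (F '' B) = f B)
    (hg : ∀ C ⊆ A, C.ncard = n → g (F '' C) = g C) :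
    setAlgebraMul m f g A = setAlgebraMul m f g A' := by
  refine finsum_mem_eq_of_bijOn (image F) (hF.image_setOf_subset_ncard_eq m) ?_
  rintro B ⟨hB, hBm⟩
  have hdiff : (A \ B).ncard = n := by
    rw [ncard_sdiff hB (hA.subset hB), hcard, hBm, Nat.add_sub_cancel_left]
  have himage_sdiff : A' \ F '' B = F '' (A \ B) := by
    rw [hF.injOn.image_sdiff, inter_eq_right.mpr hB, hF.image_eq]
  rw [himage_sdiff, hf B hB hBm, hg (A \ B) sdiff_subset hdiff]

theorem setAlgebraMul_invariant_general {E K : Type*} [Field K]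
    (R : RelStruct E) (m n : ℕ) (f g : Set E → K)
    (hf : RInvariant R m f) (hg : RInvariant R n g) :
    RInvariant R (m + n) (setAlgebraMul m f g) := by
  rintro A A' hA - hcard - hiso
  obtain ⟨F, hF, hR⟩ := hiso.exists_bijOn
  exact setAlgebraMul_eq_of_bijOn hF hA hcard
    (fun B hB hBm => hf.apply_image (hF.injOn.mono hB) (hR.mono hB) (hA.subset hB) hBm)
    (fun C hC hCn => hg.apply_image (hF.injOn.mono hC) (hR.mono hC) (hA.subset hC) hCn)

/-- in the set algebra over an infinite set `E` with coefficients in a field `K`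
of characteristic `0`, the product of an `R`-invariant function of degree `m` and an
`R`-invariant function of degree `n` is an `R`-invariant function of degree `m + n`, for any
relational structure `R` on `E`. -/
theorem setAlgebraMul_invariant {E K : Type*} [Infinite E] [Field K] [CharZero K]
    (R : RelStruct E) (m n : ℕ) (f g : Set E → K)
    (hf : RInvariant R m f) (hg : RInvariant R n g) :
    RInvariant R (m + n) (setAlgebraMul m f g) :=
  setAlgebraMul_invariant_general R m n f g hf hg
end
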